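/- arXiv:0801.0306 — 5 statements merged into one kernel-verified Lean document; each statement's English description precedes it below -/
import Mathlib

section
/- There is a unique S-algebra homomorphism p : W^aff_{n,S} → Ĥ_{n,S}(q²) satisfying p(g_i) = τ_i for 1 ≤ i ≤ n−1, p(e_i) = 0 for 1 ≤ i ≤ n−1, and p(y_1) = ρ t_1. Moreover p is surjective, and p(a*) = p(a)* for all a ∈ W^aff_{n,S}, where * denotes on W^aff_{n,S} the involutive anti-automorphism fixing g_i, e_i, y_1 and on Ĥ_{n,S}(q²) the involutive anti-automorphism fixing τ_i and t_1. -/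
noncomputable section
open scoped BigOperators

/-- Generators of the affine BMW algebra on `n` strands:  `y = y_1`, `yi = y_1⁻¹`,
and, for `i : Fin (n-1)` (representing the paper's index `i+1`),
`g i = g_{i+1}`, `gi i = g_{i+1}⁻¹`, `e i = e_{i+1}`. -/
inductive AffGen (n : ℕ) : Type
  | y : AffGen n
  | yi : AffGen n
  | g : Fin (n - 1) → AffGen n
  | gi : Fin (n - 1) → AffGen n
  | e : Fin (n - 1) → AffGen n

/-- The free `S`-algebra on the generators. -/
abbrev FA (S : Type) [CommRing S] (n : ℕ) : Type := FreeAlgebra S (AffGen n)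

variable (S : Type) [CommRing S]

def Yf (n : ℕ) : FA S n := FreeAlgebra.ι S AffGen.y
def Yif (n : ℕ) : FA S n := FreeAlgebra.ι S AffGen.yi
def Gf (n : ℕ) (i : Fin (n - 1)) : FA S n := FreeAlgebra.ι S (AffGen.g i)
def Gif (n : ℕ) (i : Fin (n - 1)) : FA S n := FreeAlgebra.ι S (AffGen.gi i)
def Ef (n : ℕ) (i : Fin (n - 1)) : FA S n := FreeAlgebra.ι S (AffGen.e i)
def Cf (n : ℕ) (s : S) : FA S n := algebraMap S (FA S n) s

/-- The defining relations of the affine BMW algebra `W^aff_{n,S}`.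
Indices are 0-based:  the constructor index `i : Fin (n-1)` corresponds to the
paper's index `i+1 ∈ {1,…,n-1}`. -/
inductive AffRel (n : ℕ) (ρ q : Sˣ) (δ : ℕ → S) : FA S n → FA S n → Prop
  /- (1) inverses -/
  | g_gi (i : Fin (n - 1)) : AffRel n ρ q δ (Gf S n i * Gif S n i) 1
  | gi_g (i : Fin (n - 1)) : AffRel n ρ q δ (Gif S n i * Gf S n i) 1
  | y_yi : AffRel n ρ q δ (Yf S n * Yif S n) 1
  | yi_y : AffRel n ρ q δ (Yif S n * Yf S n) 1
  /- (2) idempotent relation -/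
  | e_sq (i : Fin (n - 1)) :
      AffRel n ρ q δ (Ef S n i * Ef S n i) (Cf S n (δ 0) * Ef S n i)
  /- (3)(a) braid relations -/
  | braid (i : ℕ) (h : i + 1 < n - 1) :
      AffRel n ρ q δ
        (Gf S n ⟨i, Nat.lt_of_succ_lt h⟩ * Gf S n ⟨i + 1, h⟩ * Gf S n ⟨i, Nat.lt_of_succ_lt h⟩)
        (Gf S n ⟨i + 1, h⟩ * Gf S n ⟨i, Nat.lt_of_succ_lt h⟩ * Gf S n ⟨i + 1, h⟩)
  | gg_comm (i j : Fin (n - 1)) (h : (i : ℕ) + 2 ≤ (j : ℕ)) :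
      AffRel n ρ q δ (Gf S n i * Gf S n j) (Gf S n j * Gf S n i)
  /- (3)(b) type B braid relations -/
  | y_braid (h : 0 < n - 1) :
      AffRel n ρ q δ
        (Yf S n * Gf S n ⟨0, h⟩ * Yf S n * Gf S n ⟨0, h⟩)
        (Gf S n ⟨0, h⟩ * Yf S n * Gf S n ⟨0, h⟩ * Yf S n)
  | y_g_comm (j : Fin (n - 1)) (h : 1 ≤ (j : ℕ)) :
      AffRel n ρ q δ (Yf S n * Gf S n j) (Gf S n j * Yf S n)
  /- (4) commutation relations -/
  | g_e_comm (i j : Fin (n - 1)) (h : (i : ℕ) + 2 ≤ (j : ℕ) ∨ (j : ℕ) + 2 ≤ (i : ℕ)) :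
      AffRel n ρ q δ (Gf S n i * Ef S n j) (Ef S n j * Gf S n i)
  | e_e_comm (i j : Fin (n - 1)) (h : (i : ℕ) + 2 ≤ (j : ℕ)) :
      AffRel n ρ q δ (Ef S n i * Ef S n j) (Ef S n j * Ef S n i)
  | y_e_comm (j : Fin (n - 1)) (h : 1 ≤ (j : ℕ)) :
      AffRel n ρ q δ (Yf S n * Ef S n j) (Ef S n j * Yf S n)
  /- (5)(a) -/
  | eee_up (i : ℕ) (h : i + 1 < n - 1) :
      AffRel n ρ q δ
        (Ef S n ⟨i, Nat.lt_of_succ_lt h⟩ * Ef S n ⟨i + 1, h⟩ * Ef S n ⟨i, Nat.lt_of_succ_lt h⟩)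
        (Ef S n ⟨i, Nat.lt_of_succ_lt h⟩)
  | eee_down (i : ℕ) (h : i + 1 < n - 1) :
      AffRel n ρ q δ
        (Ef S n ⟨i + 1, h⟩ * Ef S n ⟨i, Nat.lt_of_succ_lt h⟩ * Ef S n ⟨i + 1, h⟩)
        (Ef S n ⟨i + 1, h⟩)
  /- (5)(b) -/
  | gge_up (i : ℕ) (h : i + 1 < n - 1) :
      AffRel n ρ q δ
        (Gf S n ⟨i, Nat.lt_of_succ_lt h⟩ * Gf S n ⟨i + 1, h⟩ * Ef S n ⟨i, Nat.lt_of_succ_lt h⟩)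
        (Ef S n ⟨i + 1, h⟩ * Ef S n ⟨i, Nat.lt_of_succ_lt h⟩)
  | gge_down (i : ℕ) (h : i + 1 < n - 1) :
      AffRel n ρ q δ
        (Gf S n ⟨i + 1, h⟩ * Gf S n ⟨i, Nat.lt_of_succ_lt h⟩ * Ef S n ⟨i + 1, h⟩)
        (Ef S n ⟨i, Nat.lt_of_succ_lt h⟩ * Ef S n ⟨i + 1, h⟩)
  | egg_up (i : ℕ) (h : i + 1 < n - 1) :
      AffRel n ρ q δ
        (Ef S n ⟨i, Nat.lt_of_succ_lt h⟩ * Gf S n ⟨i + 1, h⟩ * Gf S n ⟨i, Nat.lt_of_succ_lt h⟩)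
        (Ef S n ⟨i, Nat.lt_of_succ_lt h⟩ * Ef S n ⟨i + 1, h⟩)
  | egg_down (i : ℕ) (h : i + 1 < n - 1) :
      AffRel n ρ q δ
        (Ef S n ⟨i + 1, h⟩ * Gf S n ⟨i, Nat.lt_of_succ_lt h⟩ * Gf S n ⟨i + 1, h⟩)
        (Ef S n ⟨i + 1, h⟩ * Ef S n ⟨i, Nat.lt_of_succ_lt h⟩)
  /- (5)(c) -/
  | eye (j : ℕ) (hj : 1 ≤ j) (h : 0 < n - 1) :
      AffRel n ρ q δ
        (Ef S n ⟨0, h⟩ * Yf S n ^ j * Ef S n ⟨0, h⟩)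
        (Cf S n (δ j) * Ef S n ⟨0, h⟩)
  /- (6) Kauffman skein relation -/
  | skein (i : Fin (n - 1)) :
      AffRel n ρ q δ
        (Gf S n i - Gif S n i)
        (Cf S n (((q⁻¹ : Sˣ) : S) - (q : S)) * (Ef S n i - 1))
  /- (7) untwisting relations -/
  | untwist_ge (i : Fin (n - 1)) :
      AffRel n ρ q δ (Gf S n i * Ef S n i) (Cf S n ((ρ⁻¹ : Sˣ) : S) * Ef S n i)
  | untwist_eg (i : Fin (n - 1)) :
      AffRel n ρ q δ (Ef S n i * Gf S n i) (Cf S n ((ρ⁻¹ : Sˣ) : S) * Ef S n i)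
  | ege_up (i : ℕ) (h : i + 1 < n - 1) :
      AffRel n ρ q δ
        (Ef S n ⟨i, Nat.lt_of_succ_lt h⟩ * Gf S n ⟨i + 1, h⟩ * Ef S n ⟨i, Nat.lt_of_succ_lt h⟩)
        (Cf S n (ρ : S) * Ef S n ⟨i, Nat.lt_of_succ_lt h⟩)
  | ege_down (i : ℕ) (h : i + 1 < n - 1) :
      AffRel n ρ q δ
        (Ef S n ⟨i + 1, h⟩ * Gf S n ⟨i, Nat.lt_of_succ_lt h⟩ * Ef S n ⟨i + 1, h⟩)
        (Cf S n (ρ : S) * Ef S n ⟨i + 1, h⟩)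
  /- (8) unwrapping relations -/
  | unwrap_l (h : 0 < n - 1) :
      AffRel n ρ q δ
        (Ef S n ⟨0, h⟩ * Yf S n * Gf S n ⟨0, h⟩ * Yf S n)
        (Cf S n (ρ : S) * Ef S n ⟨0, h⟩)
  | unwrap_r (h : 0 < n - 1) :
      AffRel n ρ q δ
        (Yf S n * Gf S n ⟨0, h⟩ * Yf S n * Ef S n ⟨0, h⟩)
        (Cf S n (ρ : S) * Ef S n ⟨0, h⟩)

/-- The affine BMW algebra `W^aff_{n,S}`, presented by generators and relations. -/
abbrev AffBMW (n : ℕ) (ρ q : Sˣ) (δ : ℕ → S) : Type := RingQuot (AffRel S n ρ q δ)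

/-- The canonical quotient map onto the affine BMW algebra. -/
def affMk (n : ℕ) (ρ q : Sˣ) (δ : ℕ → S) : FA S n →ₐ[S] AffBMW S n ρ q δ :=
  RingQuot.mkAlgHom S (AffRel S n ρ q δ)

/-- The cyclotomic polynomial relation element `(y_1 - u_1)⋯(y_1 - u_r)`. -/
def cycPoly (n r : ℕ) (u : Fin r → Sˣ) : FA S n :=
  (List.ofFn (fun k : Fin r => Yf S n - Cf S n ((u k : S)))).prod

/-- The defining relations of the cyclotomic BMW algebra `W_{n,S,r}(u_1,…,u_r)`. -/
inductive CycRel (n : ℕ) (ρ q : Sˣ) (δ : ℕ → S) (r : ℕ) (u : Fin r → Sˣ) :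
    FA S n → FA S n → Prop
  | aff {a b : FA S n} : AffRel S n ρ q δ a b → CycRel n ρ q δ r u a b
  | cyc : CycRel n ρ q δ r u (cycPoly S n r u) 0

/-- The cyclotomic BMW algebra `W_{n,S,r}(u_1,…,u_r)`. -/
abbrev CycBMW (n : ℕ) (ρ q : Sˣ) (δ : ℕ → S) (r : ℕ) (u : Fin r → Sˣ) : Type :=
  RingQuot (CycRel S n ρ q δ r u)

/-- The canonical quotient map onto the cyclotomic BMW algebra. -/
def cycMk (n : ℕ) (ρ q : Sˣ) (δ : ℕ → S) (r : ℕ) (u : Fin r → Sˣ) :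
    FA S n →ₐ[S] CycBMW S n ρ q δ r u :=
  RingQuot.mkAlgHom S (CycRel S n ρ q δ r u)

/-- Admissibility of the ground ring:  `e_1, y_1 e_1, …, y_1^{r-1} e_1` are linearly
independent in the 2-strand cyclotomic BMW algebra. -/
def Admissible (ρ q : Sˣ) (δ : ℕ → S) (r : ℕ) (u : Fin r → Sˣ) : Prop :=
  LinearIndependent S (fun k : Fin r =>
    cycMk S 2 ρ q δ r u (Yf S 2 ^ (k : ℕ) * Ef S 2 ⟨0, by norm_num⟩))

/-- The relation on the parameters of the ground ring. -/
def GroundRel (ρ q : Sˣ) (δ : ℕ → S) : Prop :=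
  ((ρ⁻¹ : Sˣ) : S) - (ρ : S) = (((q⁻¹ : Sˣ) : S) - (q : S)) * (δ 0 - 1)


/-- `g_i` (paper index `1 ≤ i ≤ n-1`), as an element of the free algebra; the value for
out-of-range indices is the (never used) junk value `1`. -/
def GF (n : ℕ) (i : ℕ) : FA S n := if h : i - 1 < n - 1 ∧ 1 ≤ i then Gf S n ⟨i - 1, h.1⟩ else 1
def GiF (n : ℕ) (i : ℕ) : FA S n := if h : i - 1 < n - 1 ∧ 1 ≤ i then Gif S n ⟨i - 1, h.1⟩ else 1
def EF (n : ℕ) (i : ℕ) : FA S n := if h : i - 1 < n - 1 ∧ 1 ≤ i then Ef S n ⟨i - 1, h.1⟩ else 1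

/-- The element `x_j` (paper index `1 ≤ j ≤ n`):  `x_1 = ρ⁻¹ y_1` and
`x_{j+1} = g_j x_j g_j`. -/
def xF (n : ℕ) (ρ : Sˣ) : ℕ → FA S n
  | 0 => 1
  | 1 => Cf S n ((ρ⁻¹ : Sˣ) : S) * Yf S n
  | (j + 2) => GF S n (j + 1) * xF n ρ (j + 1) * GF S n (j + 1)

/-- The element `x_j⁻¹`. -/
def xiF (n : ℕ) (ρ : Sˣ) : ℕ → FA S n
  | 0 => 1
  | 1 => Cf S n ((ρ : Sˣ) : S) * Yif S n
  | (j + 2) => GiF S n (j + 1) * xiF n ρ (j + 1) * GiF S n (j + 1)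

/-- The integer power `x_j^a`, `a : ℤ`. -/
def xzF (n : ℕ) (ρ : Sˣ) (j : ℕ) (a : ℤ) : FA S n :=
  xF S n ρ j ^ a.toNat * xiF S n ρ j ^ (-a).toNat

/-- The product `g_{i_1} ⋯ g_{i_ℓ}` over a word in the generator indices (0-based). -/
def gWord (n : ℕ) (l : List (Fin (n - 1))) : FA S n := (l.map (fun i => Gf S n i)).prod

/-- The product `e_1 e_3 ⋯ e_{2f-1}` (paper indexing). -/
def EEf (n f : ℕ) : FA S n := (List.ofFn (fun i : Fin f => EF S n (2 * (i : ℕ) + 1))).prod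

open scoped BigOperators

/-- Generators of the affine Hecke algebra:  `t = t_1`, `ti = t_1⁻¹`, and, for
`i : Fin (n-1)` (representing the paper's index `i+1`), `tau i = τ_{i+1}`,
`taui i = τ_{i+1}⁻¹`. -/
inductive HGen (n : ℕ) : Type
  | t : HGen n
  | ti : HGen n
  | tau : Fin (n - 1) → HGen n
  | taui : Fin (n - 1) → HGen n

/-- The free `S`-algebra on the Hecke generators. -/
abbrev FH (S : Type) [CommRing S] (n : ℕ) : Type := FreeAlgebra S (HGen n)

variable (S : Type) [CommRing S]

def Tf (n : ℕ) : FH S n := FreeAlgebra.ι S HGen.t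
def Tif (n : ℕ) : FH S n := FreeAlgebra.ι S HGen.ti
def Tauf (n : ℕ) (i : Fin (n - 1)) : FH S n := FreeAlgebra.ι S (HGen.tau i)
def Tauif (n : ℕ) (i : Fin (n - 1)) : FH S n := FreeAlgebra.ι S (HGen.taui i)
def Ch (n : ℕ) (s : S) : FH S n := algebraMap S (FH S n) s

/-- The defining relations of the affine Hecke algebra `Ĥ_{n,S}(q²)`.  Indices are
0-based:  `i : Fin (n-1)` corresponds to the paper's index `i+1`. -/
inductive HRel (n : ℕ) (q : Sˣ) : FH S n → FH S n → Prop
  | tau_taui (i : Fin (n - 1)) : HRel n q (Tauf S n i * Tauif S n i) 1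
  | taui_tau (i : Fin (n - 1)) : HRel n q (Tauif S n i * Tauf S n i) 1
  | braid (i : ℕ) (h : i + 1 < n - 1) :
      HRel n q
        (Tauf S n ⟨i, Nat.lt_of_succ_lt h⟩ * Tauf S n ⟨i + 1, h⟩ *
          Tauf S n ⟨i, Nat.lt_of_succ_lt h⟩)
        (Tauf S n ⟨i + 1, h⟩ * Tauf S n ⟨i, Nat.lt_of_succ_lt h⟩ * Tauf S n ⟨i + 1, h⟩)
  | tau_comm (i j : Fin (n - 1)) (h : (i : ℕ) + 2 ≤ (j : ℕ)) :
      HRel n q (Tauf S n i * Tauf S n j) (Tauf S n j * Tauf S n i)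
  | skein (i : Fin (n - 1)) :
      HRel n q (Tauf S n i - Tauif S n i) (Ch S n ((q : S) - ((q⁻¹ : Sˣ) : S)))
  | t_ti : HRel n q (Tf S n * Tif S n) 1
  | ti_t : HRel n q (Tif S n * Tf S n) 1
  | t_braid (h : 0 < n - 1) :
      HRel n q
        (Tf S n * Tauf S n ⟨0, h⟩ * Tf S n * Tauf S n ⟨0, h⟩)
        (Tauf S n ⟨0, h⟩ * Tf S n * Tauf S n ⟨0, h⟩ * Tf S n)
  | t_comm (j : Fin (n - 1)) (h : 1 ≤ (j : ℕ)) :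
      HRel n q (Tf S n * Tauf S n j) (Tauf S n j * Tf S n)

/-- The affine Hecke algebra `Ĥ_{n,S}(q²)`, presented by generators and relations. -/
abbrev AffHecke (n : ℕ) (q : Sˣ) : Type := RingQuot (HRel S n q)

/-- The canonical quotient map onto the affine Hecke algebra. -/
def heckeMk (n : ℕ) (q : Sˣ) : FH S n →ₐ[S] AffHecke S n q :=
  RingQuot.mkAlgHom S (HRel S n q)

/-- The cyclotomic relation element `(t_1 - u_1)⋯(t_1 - u_r)`. -/
def cycHPoly (n r : ℕ) (u : Fin r → Sˣ) : FH S n :=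
  (List.ofFn (fun k : Fin r => Tf S n - Ch S n ((u k : S)))).prod

/-- The defining relations of the cyclotomic Hecke algebra `H_{n,S,r}(q²;u_1,…,u_r)`. -/
inductive CycHRel (n : ℕ) (q : Sˣ) (r : ℕ) (u : Fin r → Sˣ) : FH S n → FH S n → Prop
  | aff {a b : FH S n} : HRel S n q a b → CycHRel n q r u a b
  | cyc : CycHRel n q r u (cycHPoly S n r u) 0

/-- The cyclotomic Hecke algebra `H_{n,S,r}(q²;u_1,…,u_r)`. -/
abbrev CycHecke (n : ℕ) (q : Sˣ) (r : ℕ) (u : Fin r → Sˣ) : Type :=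
  RingQuot (CycHRel S n q r u)

/-- The canonical quotient map onto the cyclotomic Hecke algebra. -/
def cycHeckeMk (n : ℕ) (q : Sˣ) (r : ℕ) (u : Fin r → Sˣ) :
    FH S n →ₐ[S] CycHecke S n q r u :=
  RingQuot.mkAlgHom S (CycHRel S n q r u)

/-- `τ_i` (paper index `1 ≤ i ≤ n-1`), with junk value `1` out of range. -/
def TauF (n : ℕ) (i : ℕ) : FH S n :=
  if h : i - 1 < n - 1 ∧ 1 ≤ i then Tauf S n ⟨i - 1, h.1⟩ else 1
def TauiF (n : ℕ) (i : ℕ) : FH S n :=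
  if h : i - 1 < n - 1 ∧ 1 ≤ i then Tauif S n ⟨i - 1, h.1⟩ else 1

/-- The element `t_j = τ_{j-1} ⋯ τ_1 t_1 τ_1 ⋯ τ_{j-1}` (paper index `1 ≤ j ≤ n`). -/
def tF (n : ℕ) : ℕ → FH S n
  | 0 => 1
  | 1 => Tf S n
  | (j + 2) => TauF S n (j + 1) * tF n (j + 1) * TauF S n (j + 1)

/-- The element `t_j⁻¹`. -/
def tiF (n : ℕ) : ℕ → FH S n
  | 0 => 1
  | 1 => Tif S n
  | (j + 2) => TauiF S n (j + 1) * tiF n (j + 1) * TauiF S n (j + 1)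

/-- The integer power `t_j^b`, `b : ℤ`. -/
def tzF (n : ℕ) (j : ℕ) (b : ℤ) : FH S n := tF S n j ^ b.toNat * tiF S n j ^ (-b).toNat

/-- The product `τ_{i_1} ⋯ τ_{i_ℓ}` over a word in the generator indices (0-based). -/
def tauWord (n : ℕ) (l : List (Fin (n - 1))) : FH S n := (l.map (fun i => Tauf S n i)).prod

/-- The property of being an `S`-linear algebra anti-homomorphism of `W^aff_{n,S}` fixing
the generators `g_i`, `e_i`, `y_1`. -/
def IsStarMap (S : Type) [CommRing S] (n : ℕ) (ρ q : Sˣ) (δ : ℕ → S)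
    (f : AffBMW S n ρ q δ →ₗ[S] AffBMW S n ρ q δ) : Prop :=
  (∀ a b, f (a * b) = f b * f a) ∧ f 1 = 1 ∧
    (∀ i : Fin (n - 1), f (affMk S n ρ q δ (Gf S n i)) = affMk S n ρ q δ (Gf S n i)) ∧
    (∀ i : Fin (n - 1), f (affMk S n ρ q δ (Ef S n i)) = affMk S n ρ q δ (Ef S n i)) ∧
    f (affMk S n ρ q δ (Yf S n)) = affMk S n ρ q δ (Yf S n)

/-- The property of being an `S`-linear algebra anti-homomorphism of `Ĥ_{n,S}(q²)` fixing
the generators `τ_i` and `t_1`. -/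
def IsHeckeStarMap (S : Type) [CommRing S] (n : ℕ) (q : Sˣ)
    (f : AffHecke S n q →ₗ[S] AffHecke S n q) : Prop :=
  (∀ a b, f (a * b) = f b * f a) ∧ f 1 = 1 ∧
    (∀ i : Fin (n - 1), f (heckeMk S n q (Tauf S n i)) = heckeMk S n q (Tauf S n i)) ∧
    f (heckeMk S n q (Tf S n)) = heckeMk S n q (Tf S n)

namespace AffBMWProof

variable {S}
variable {n : ℕ} {ρ q : Sˣ} {δ : ℕ → S}

lemma hrel {a b : FH S n} (h : HRel S n q a b) :
    heckeMk S n q a = heckeMk S n q b := RingQuot.mkAlgHom_rel S h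

lemma arel {a b : FA S n} (h : AffRel S n ρ q δ a b) :
    affMk S n ρ q δ a = affMk S n ρ q δ b := RingQuot.mkAlgHom_rel S h

lemma mkmul (a b : FH S n) :
    heckeMk S n q a * heckeMk S n q b = heckeMk S n q (a * b) := (map_mul _ _ _).symm

lemma hmk_taui (i : Fin (n - 1)) :
    heckeMk S n q (Tauif S n i) =
      heckeMk S n q (Tauf S n i) - algebraMap S _ ((q : S) - ((q⁻¹ : Sˣ) : S)) := by
  have h := hrel (q := q) (HRel.skein (S := S) (n := n) (q := q) i)
  rw [map_sub] at h
  have h2 : heckeMk S n q (Ch S n ((q : S) - ((q⁻¹ : Sˣ) : S)))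
      = algebraMap S _ ((q : S) - ((q⁻¹ : Sˣ) : S)) := (heckeMk S n q).commutes _
  rw [h2] at h
  rw [← sub_sub_cancel (heckeMk S n q (Tauf S n i)) (heckeMk S n q (Tauif S n i)), h]

/-- The map on generators. -/
def pGen (n : ℕ) (ρ q : Sˣ) : AffGen n → AffHecke S n q
  | .y => (ρ : S) • heckeMk S n q (Tf S n)
  | .yi => ((ρ⁻¹ : Sˣ) : S) • heckeMk S n q (Tif S n)
  | .g i => heckeMk S n q (Tauf S n i)
  | .gi i => heckeMk S n q (Tauif S n i)
  | .e _ => 0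

/-- The lift to the free algebra. -/
def pFree (n : ℕ) (ρ q : Sˣ) : FA S n →ₐ[S] AffHecke S n q :=
  FreeAlgebra.lift S (pGen n ρ q)

lemma pFree_rel : ∀ ⦃a b : FA S n⦄, AffRel S n ρ q δ a b → pFree n ρ q a = pFree n ρ q b := by
  intro a b h
  cases h with
  | g_gi i =>
      simp only [pFree, Yf, Yif, Gf, Gif, Ef, Cf, map_mul, map_one,
        FreeAlgebra.lift_ι_apply, pGen]
      simp only [mkmul]
      exact (hrel (HRel.tau_taui i)).trans (map_one _)
  | gi_g i =>
      simp only [pFree, Yf, Yif, Gf, Gif, Ef, Cf, map_mul, map_one,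
        FreeAlgebra.lift_ι_apply, pGen]
      simp only [mkmul]
      exact (hrel (HRel.taui_tau i)).trans (map_one _)
  | y_yi =>
      simp only [pFree, Yf, Yif, map_mul, map_one, FreeAlgebra.lift_ι_apply, pGen,
        smul_mul_assoc, mul_smul_comm, smul_smul]
      simp only [mkmul]
      rw [Units.inv_mul, one_smul]
      exact (hrel HRel.t_ti).trans (map_one _)
  | yi_y =>
      simp only [pFree, Yf, Yif, map_mul, map_one, FreeAlgebra.lift_ι_apply, pGen,
        smul_mul_assoc, mul_smul_comm, smul_smul]
      simp only [mkmul]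
      rw [Units.mul_inv, one_smul]
      exact (hrel HRel.ti_t).trans (map_one _)
  | e_sq i =>
      simp [Ef, Cf, pFree, FreeAlgebra.lift_ι_apply, pGen]
  | braid i h =>
      simp only [pFree, Gf, map_mul, FreeAlgebra.lift_ι_apply, pGen]
      simp only [mkmul]
      exact hrel (HRel.braid i h)
  | gg_comm i j h =>
      simp only [pFree, Gf, map_mul, FreeAlgebra.lift_ι_apply, pGen]
      simp only [mkmul]
      exact hrel (HRel.tau_comm i j h)
  | y_braid h =>
      simp only [pFree, Yf, Gf, map_mul, FreeAlgebra.lift_ι_apply, pGen,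
        smul_mul_assoc, mul_smul_comm, smul_smul]
      simp only [mkmul]
      rw [hrel (HRel.t_braid h)]
  | y_g_comm j h =>
      simp only [pFree, Yf, Gf, map_mul, FreeAlgebra.lift_ι_apply, pGen,
        smul_mul_assoc, mul_smul_comm, smul_smul]
      simp only [mkmul]
      rw [hrel (HRel.t_comm j h)]
  | g_e_comm i j h => simp [Gf, Ef, pFree, FreeAlgebra.lift_ι_apply, pGen]
  | e_e_comm i j h => simp [Ef, pFree, FreeAlgebra.lift_ι_apply, pGen]
  | y_e_comm j h => simp [Yf, Ef, pFree, FreeAlgebra.lift_ι_apply, pGen]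
  | eee_up i h => simp [Ef, pFree, FreeAlgebra.lift_ι_apply, pGen]
  | eee_down i h => simp [Ef, pFree, FreeAlgebra.lift_ι_apply, pGen]
  | gge_up i h => simp [Gf, Ef, pFree, FreeAlgebra.lift_ι_apply, pGen]
  | gge_down i h => simp [Gf, Ef, pFree, FreeAlgebra.lift_ι_apply, pGen]
  | egg_up i h => simp [Gf, Ef, pFree, FreeAlgebra.lift_ι_apply, pGen]
  | egg_down i h => simp [Gf, Ef, pFree, FreeAlgebra.lift_ι_apply, pGen]
  | eye j hj h => simp [Yf, Ef, Cf, pFree, FreeAlgebra.lift_ι_apply, pGen]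
  | skein i =>
      simp only [pFree, Gf, Gif, Ef, Cf, map_sub, map_mul, map_one,
        FreeAlgebra.lift_ι_apply, pGen, AlgHom.commutes]
      rw [← map_sub (heckeMk S n q) (Tauf S n i) (Tauif S n i), hrel (HRel.skein i)]
      have h01 : (0 : AffHecke S n q) - 1 = algebraMap S _ ((0 : S) - 1) := by
        rw [map_sub, map_zero, map_one]
      rw [h01, ← map_sub (algebraMap S (AffHecke S n q)), ← map_mul]
      simp only [Ch, AlgHom.commutes]
      congr 1
      ring
  | untwist_ge i => simp [Gf, Ef, Cf, pFree, FreeAlgebra.lift_ι_apply, pGen]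
  | untwist_eg i => simp [Gf, Ef, Cf, pFree, FreeAlgebra.lift_ι_apply, pGen]
  | ege_up i h => simp [Gf, Ef, Cf, pFree, FreeAlgebra.lift_ι_apply, pGen]
  | ege_down i h => simp [Gf, Ef, Cf, pFree, FreeAlgebra.lift_ι_apply, pGen]
  | unwrap_l h => simp [Yf, Gf, Ef, Cf, pFree, FreeAlgebra.lift_ι_apply, pGen]
  | unwrap_r h => simp [Yf, Gf, Ef, Cf, pFree, FreeAlgebra.lift_ι_apply, pGen]

lemma hmk_t_ti : heckeMk S n q (Tf S n) * heckeMk S n q (Tif S n) = 1 := by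
  rw [mkmul]; exact (hrel HRel.t_ti).trans (map_one _)

lemma amk_y_yi : affMk S n ρ q δ (Yf S n) * affMk S n ρ q δ (Yif S n) = 1 := by
  rw [← map_mul]; exact (arel AffRel.y_yi).trans (map_one _)

lemma amk_yi_y : affMk S n ρ q δ (Yif S n) * affMk S n ρ q δ (Yf S n) = 1 := by
  rw [← map_mul]; exact (arel AffRel.yi_y).trans (map_one _)

lemma p_t_unit :
    (algebraMap S (AffHecke S n q) (ρ : S) * heckeMk S n q (Tf S n)) *
      (algebraMap S (AffHecke S n q) ((ρ⁻¹ : Sˣ) : S) * heckeMk S n q (Tif S n)) = 1 := by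
  rw [← Algebra.smul_def, ← Algebra.smul_def, smul_mul_assoc, mul_smul_comm, smul_smul,
    hmk_t_ti, Units.mul_inv, one_smul]

section PProps

variable (p : AffBMW S n ρ q δ →ₐ[S] AffHecke S n q)

lemma p_gif
    (hg : ∀ i : Fin (n - 1), p (affMk S n ρ q δ (Gf S n i)) = heckeMk S n q (Tauf S n i))
    (he : ∀ i : Fin (n - 1), p (affMk S n ρ q δ (Ef S n i)) = 0) (i : Fin (n - 1)) :
    p (affMk S n ρ q δ (Gif S n i)) = heckeMk S n q (Tauif S n i) := by
  have h := congrArg p (arel (AffRel.skein (S := S) (n := n) (ρ := ρ) (q := q) (δ := δ) i))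
  simp only [map_sub, map_mul, map_one, Cf, AlgHom.commutes, hg, he] at h
  rw [← sub_sub_cancel (heckeMk S n q (Tauf S n i)) (p (affMk S n ρ q δ (Gif S n i))), h,
    hmk_taui i]
  congr 1
  have h01 : (0 : AffHecke S n q) - 1 = algebraMap S _ ((0 : S) - 1) := by
    rw [map_sub, map_zero, map_one]
  rw [h01, ← map_sub (algebraMap S (AffHecke S n q)), ← map_mul]
  congr 1
  ring

lemma p_yif
    (hy : p (affMk S n ρ q δ (Yf S n)) =
      algebraMap S _ (ρ : S) * heckeMk S n q (Tf S n)) :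
    p (affMk S n ρ q δ (Yif S n)) =
      algebraMap S _ ((ρ⁻¹ : Sˣ) : S) * heckeMk S n q (Tif S n) := by
  have hleft : p (affMk S n ρ q δ (Yif S n)) *
      (algebraMap S (AffHecke S n q) (ρ : S) * heckeMk S n q (Tf S n)) = 1 := by
    rw [← hy, ← map_mul, amk_yi_y, map_one]
  calc p (affMk S n ρ q δ (Yif S n))
      = p (affMk S n ρ q δ (Yif S n)) *
          ((algebraMap S (AffHecke S n q) (ρ : S) * heckeMk S n q (Tf S n)) *
            (algebraMap S (AffHecke S n q) ((ρ⁻¹ : Sˣ) : S) * heckeMk S n q (Tif S n))) := by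
        rw [p_t_unit, mul_one]
    _ = (p (affMk S n ρ q δ (Yif S n)) *
          (algebraMap S (AffHecke S n q) (ρ : S) * heckeMk S n q (Tf S n))) *
            (algebraMap S (AffHecke S n q) ((ρ⁻¹ : Sˣ) : S) * heckeMk S n q (Tif S n)) :=
        (mul_assoc _ _ _).symm
    _ = algebraMap S (AffHecke S n q) ((ρ⁻¹ : Sˣ) : S) * heckeMk S n q (Tif S n) := by
        rw [hleft, one_mul]

end PProps

/-- The projection homomorphism. -/
def pHom (n : ℕ) (ρ q : Sˣ) (δ : ℕ → S) : AffBMW S n ρ q δ →ₐ[S] AffHecke S n q :=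
  RingQuot.liftAlgHom S ⟨pFree n ρ q, fun _ _ h => pFree_rel h⟩

lemma pHom_g (i : Fin (n - 1)) :
    pHom n ρ q δ (affMk S n ρ q δ (Gf S n i)) = heckeMk S n q (Tauf S n i) := by
  simp only [pHom, affMk, RingQuot.liftAlgHom_mkAlgHom_apply, pFree, Gf,
    FreeAlgebra.lift_ι_apply, pGen]

lemma pHom_e (i : Fin (n - 1)) :
    pHom n ρ q δ (affMk S n ρ q δ (Ef S n i)) = 0 := by
  simp only [pHom, affMk, RingQuot.liftAlgHom_mkAlgHom_apply, pFree, Ef,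
    FreeAlgebra.lift_ι_apply, pGen]

lemma pHom_y :
    pHom n ρ q δ (affMk S n ρ q δ (Yf S n)) =
      algebraMap S _ (ρ : S) * heckeMk S n q (Tf S n) := by
  simp only [pHom, affMk, RingQuot.liftAlgHom_mkAlgHom_apply, pFree, Yf,
    FreeAlgebra.lift_ι_apply, pGen]
  rw [Algebra.smul_def]

lemma p_unique (p1 p2 : AffBMW S n ρ q δ →ₐ[S] AffHecke S n q)
    (h1g : ∀ i : Fin (n - 1), p1 (affMk S n ρ q δ (Gf S n i)) = heckeMk S n q (Tauf S n i))
    (h1e : ∀ i : Fin (n - 1), p1 (affMk S n ρ q δ (Ef S n i)) = 0)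
    (h1y : p1 (affMk S n ρ q δ (Yf S n)) = algebraMap S _ (ρ : S) * heckeMk S n q (Tf S n))
    (h2g : ∀ i : Fin (n - 1), p2 (affMk S n ρ q δ (Gf S n i)) = heckeMk S n q (Tauf S n i))
    (h2e : ∀ i : Fin (n - 1), p2 (affMk S n ρ q δ (Ef S n i)) = 0)
    (h2y : p2 (affMk S n ρ q δ (Yf S n)) = algebraMap S _ (ρ : S) * heckeMk S n q (Tf S n)) :
    p1 = p2 := by
  apply RingQuot.ringQuot_ext'
  apply FreeAlgebra.hom_ext
  funext x
  simp only [AlgHom.coe_comp, Function.comp_apply]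
  cases x with
  | y => exact h1y.trans h2y.symm
  | yi => exact (p_yif p1 h1y).trans (p_yif p2 h2y).symm
  | g i => exact (h1g i).trans (h2g i).symm
  | gi i => exact (p_gif p1 h1g h1e i).trans (p_gif p2 h2g h2e i).symm
  | e i => exact (h1e i).trans (h2e i).symm

section StarProps

lemma fW_alg (fW : AffBMW S n ρ q δ →ₗ[S] AffBMW S n ρ q δ) (h1 : fW 1 = 1) (s : S) :
    fW (algebraMap S _ s) = algebraMap S _ s := by
  rw [Algebra.algebraMap_eq_smul_one, map_smul, h1]

lemma fH_alg (fH : AffHecke S n q →ₗ[S] AffHecke S n q) (h1 : fH 1 = 1) (s : S) :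
    fH (algebraMap S _ s) = algebraMap S _ s := by
  rw [Algebra.algebraMap_eq_smul_one, map_smul, h1]

lemma fH_ti (fH : AffHecke S n q →ₗ[S] AffHecke S n q)
    (hmul : ∀ a b, fH (a * b) = fH b * fH a) (h1 : fH 1 = 1)
    (ht : fH (heckeMk S n q (Tf S n)) = heckeMk S n q (Tf S n)) :
    fH (heckeMk S n q (Tif S n)) = heckeMk S n q (Tif S n) := by
  have hinv : fH (heckeMk S n q (Tif S n)) * heckeMk S n q (Tf S n) = 1 := by
    rw [← ht, ← hmul, hmk_t_ti, h1]
  calc fH (heckeMk S n q (Tif S n))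
      = fH (heckeMk S n q (Tif S n)) * (heckeMk S n q (Tf S n) * heckeMk S n q (Tif S n)) := by
        rw [hmk_t_ti, mul_one]
    _ = (fH (heckeMk S n q (Tif S n)) * heckeMk S n q (Tf S n)) * heckeMk S n q (Tif S n) :=
        (mul_assoc _ _ _).symm
    _ = heckeMk S n q (Tif S n) := by rw [hinv, one_mul]

lemma fH_taui (fH : AffHecke S n q →ₗ[S] AffHecke S n q) (h1 : fH 1 = 1)
    (htau : ∀ i : Fin (n - 1), fH (heckeMk S n q (Tauf S n i)) = heckeMk S n q (Tauf S n i))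
    (i : Fin (n - 1)) :
    fH (heckeMk S n q (Tauif S n i)) = heckeMk S n q (Tauif S n i) := by
  rw [hmk_taui i, map_sub, htau i, fH_alg fH h1]

lemma fW_yif (fW : AffBMW S n ρ q δ →ₗ[S] AffBMW S n ρ q δ)
    (hmul : ∀ a b, fW (a * b) = fW b * fW a) (h1 : fW 1 = 1)
    (hy' : fW (affMk S n ρ q δ (Yf S n)) = affMk S n ρ q δ (Yf S n)) :
    fW (affMk S n ρ q δ (Yif S n)) = affMk S n ρ q δ (Yif S n) := by
  have hinv : fW (affMk S n ρ q δ (Yif S n)) * affMk S n ρ q δ (Yf S n) = 1 := by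
    rw [← hy', ← hmul, amk_y_yi, h1]
  calc fW (affMk S n ρ q δ (Yif S n))
      = fW (affMk S n ρ q δ (Yif S n)) *
          (affMk S n ρ q δ (Yf S n) * affMk S n ρ q δ (Yif S n)) := by
        rw [amk_y_yi, mul_one]
    _ = (fW (affMk S n ρ q δ (Yif S n)) * affMk S n ρ q δ (Yf S n)) *
          affMk S n ρ q δ (Yif S n) := (mul_assoc _ _ _).symm
    _ = affMk S n ρ q δ (Yif S n) := by rw [hinv, one_mul]

lemma fW_gif (fW : AffBMW S n ρ q δ →ₗ[S] AffBMW S n ρ q δ) (h1 : fW 1 = 1)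
    (hg' : ∀ i : Fin (n - 1), fW (affMk S n ρ q δ (Gf S n i)) = affMk S n ρ q δ (Gf S n i))
    (he' : ∀ i : Fin (n - 1), fW (affMk S n ρ q δ (Ef S n i)) = affMk S n ρ q δ (Ef S n i))
    (i : Fin (n - 1)) :
    fW (affMk S n ρ q δ (Gif S n i)) = affMk S n ρ q δ (Gif S n i) := by
  have h := arel (AffRel.skein (S := S) (n := n) (ρ := ρ) (q := q) (δ := δ) i)
  simp only [map_sub, map_mul, map_one, Cf, AlgHom.commutes] at h
  rw [← map_sub (algebraMap S (AffBMW S n ρ q δ))] at h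
  have hd : affMk S n ρ q δ (Gif S n i) = affMk S n ρ q δ (Gf S n i) -
      algebraMap S _ (((q⁻¹ : Sˣ) : S) - (q : S)) * (affMk S n ρ q δ (Ef S n i) - 1) := by
    rw [← h, sub_sub_cancel]
  rw [hd, map_sub, ← Algebra.smul_def, map_smul, map_sub, hg' i, he' i, h1]

end StarProps

end AffBMWProof

open AffBMWProof

/-- There is a unique `S`-algebra homomorphism
`p : W^aff_{n,S} → Ĥ_{n,S}(q²)` with `p(g_i) = τ_i`, `p(e_i) = 0`, `p(y_1) = ρ t_1`;
it is surjective and compatible with the involutions `*` of the two algebras. -/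
theorem affineBMW_to_affineHecke (S : Type) [CommRing S] (n : ℕ) (ρ q : Sˣ) (δ : ℕ → S)
    (hδ0 : IsUnit (δ 0)) (hground : GroundRel S ρ q δ) :
    (∃! p : AffBMW S n ρ q δ →ₐ[S] AffHecke S n q,
      (∀ i : Fin (n - 1), p (affMk S n ρ q δ (Gf S n i)) = heckeMk S n q (Tauf S n i)) ∧
      (∀ i : Fin (n - 1), p (affMk S n ρ q δ (Ef S n i)) = 0) ∧
      p (affMk S n ρ q δ (Yf S n)) = algebraMap S _ (ρ : S) * heckeMk S n q (Tf S n)) ∧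
    (∀ p : AffBMW S n ρ q δ →ₐ[S] AffHecke S n q,
      ((∀ i : Fin (n - 1), p (affMk S n ρ q δ (Gf S n i)) = heckeMk S n q (Tauf S n i)) ∧
       (∀ i : Fin (n - 1), p (affMk S n ρ q δ (Ef S n i)) = 0) ∧
       p (affMk S n ρ q δ (Yf S n)) = algebraMap S _ (ρ : S) * heckeMk S n q (Tf S n)) →
      Function.Surjective p ∧
      (∀ (fW : AffBMW S n ρ q δ →ₗ[S] AffBMW S n ρ q δ)
         (fH : AffHecke S n q →ₗ[S] AffHecke S n q),
        IsStarMap S n ρ q δ fW → IsHeckeStarMap S n q fH →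
          ∀ a : AffBMW S n ρ q δ, p (fW a) = fH (p a))) := by
  constructor
  · refine ⟨pHom n ρ q δ, ⟨fun i => pHom_g i, fun i => pHom_e i, pHom_y⟩, ?_⟩
    rintro p' ⟨h1g, h1e, h1y⟩
    exact p_unique p' (pHom n ρ q δ) h1g h1e h1y (fun i => pHom_g i) (fun i => pHom_e i) pHom_y
  · rintro p ⟨hg, he, hy⟩
    constructor
    · intro z
      obtain ⟨x, rfl⟩ := RingQuot.mkAlgHom_surjective S (HRel S n q) z
      refine FreeAlgebra.induction S (HGen n)
        (motive := fun x => ∃ a, p a = heckeMk S n q x) ?_ ?_ ?_ ?_ x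
      · intro r
        exact ⟨algebraMap S _ r, by rw [AlgHom.commutes, AlgHom.commutes]⟩
      · intro g
        cases g with
        | t =>
            refine ⟨algebraMap S _ ((ρ⁻¹ : Sˣ) : S) * affMk S n ρ q δ (Yf S n), ?_⟩
            rw [map_mul, AlgHom.commutes, hy, ← mul_assoc, ← map_mul, Units.inv_mul,
              map_one, one_mul]
            rfl
        | ti =>
            refine ⟨algebraMap S _ (ρ : S) * affMk S n ρ q δ (Yif S n), ?_⟩
            rw [map_mul, AlgHom.commutes, p_yif p hy, ← mul_assoc, ← map_mul, Units.mul_inv,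
              map_one, one_mul]
            rfl
        | tau i => exact ⟨affMk S n ρ q δ (Gf S n i), hg i⟩
        | taui i => exact ⟨affMk S n ρ q δ (Gif S n i), p_gif p hg he i⟩
      · rintro a b ⟨wa, hwa⟩ ⟨wb, hwb⟩
        exact ⟨wa * wb, by rw [map_mul, hwa, hwb, ← map_mul]⟩
      · rintro a b ⟨wa, hwa⟩ ⟨wb, hwb⟩
        exact ⟨wa + wb, by rw [map_add, hwa, hwb, ← map_add]⟩
    · intro fW fH hW hH a
      obtain ⟨hWmul, hW1, hWg, hWe, hWy⟩ := hW
      obtain ⟨hHmul, hH1, hHtau, hHt⟩ := hH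
      obtain ⟨x, rfl⟩ := RingQuot.mkAlgHom_surjective S (AffRel S n ρ q δ) a
      refine FreeAlgebra.induction S (AffGen n)
        (motive := fun x => p (fW (affMk S n ρ q δ x)) = fH (p (affMk S n ρ q δ x))) ?_ ?_ ?_ ?_ x
      · intro r
        rw [AlgHom.commutes, fW_alg fW hW1, AlgHom.commutes, fH_alg fH hH1]
      · intro g
        cases g with
        | y =>
            show p (fW (affMk S n ρ q δ (Yf S n))) = fH (p (affMk S n ρ q δ (Yf S n)))
            rw [hWy, hy, ← Algebra.smul_def, map_smul, hHt]
        | yi =>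
            show p (fW (affMk S n ρ q δ (Yif S n))) = fH (p (affMk S n ρ q δ (Yif S n)))
            rw [fW_yif fW hWmul hW1 hWy, p_yif p hy, ← Algebra.smul_def, map_smul,
              fH_ti fH hHmul hH1 hHt]
        | g i =>
            show p (fW (affMk S n ρ q δ (Gf S n i))) = fH (p (affMk S n ρ q δ (Gf S n i)))
            rw [hWg i, hg i, hHtau i]
        | gi i =>
            show p (fW (affMk S n ρ q δ (Gif S n i))) = fH (p (affMk S n ρ q δ (Gif S n i)))
            rw [fW_gif fW hW1 hWg hWe i, p_gif p hg he i, fH_taui fH hH1 hHtau i]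
        | e i =>
            show p (fW (affMk S n ρ q δ (Ef S n i))) = fH (p (affMk S n ρ q δ (Ef S n i)))
            rw [hWe i, he i, map_zero]
      · intro a b ha hb
        simp only [map_mul, hWmul, hHmul, ha, hb]
      · intro a b ha hb
        simp only [map_add, ha, hb]


end
end

section
/- In the affine BMW algebra W^aff_{n,S}, the elements x_1, …, x_n pairwise commute: x_i x_j = x_j x_i for all 1 ≤ i, j ≤ n. -/
noncomputable section
open scoped BigOperators

variable (S : Type) [CommRing S]

/-! ### Auxiliary lemmas for Statement 9 -/

section AuxX

variable {S : Type} [CommRing S] {n : ℕ} {ρ q : Sˣ} {δ : ℕ → S}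

private lemma mk_rel {a b : FA S n} (h : AffRel S n ρ q δ a b) :
    affMk S n ρ q δ a = affMk S n ρ q δ b :=
  RingQuot.mkAlgHom_rel S h

private lemma GF_succ (k : ℕ) (h : k < n - 1) : GF S n (k + 1) = Gf S n ⟨k, h⟩ := by
  have hc : k + 1 - 1 < n - 1 ∧ 1 ≤ k + 1 := ⟨by simpa using h, by omega⟩
  simp only [GF, dif_pos hc]
  exact congrArg (Gf S n) (Fin.ext (by simp))

private lemma GF_junk (k : ℕ) (h : ¬ k < n - 1) : GF S n (k + 1) = 1 := by
  simp [GF, h]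

private lemma Cf_central (s : S) (z : AffBMW S n ρ q δ) :
    Commute (affMk S n ρ q δ (Cf S n s)) z := by
  have h : affMk S n ρ q δ (Cf S n s) = algebraMap S (AffBMW S n ρ q δ) s :=
    (affMk S n ρ q δ).commutes s
  rw [h]
  exact Algebra.commutes s z

private lemma yG0 (k : ℕ) (hk : 1 ≤ k) :
    Commute (affMk S n ρ q δ (Yf S n)) (affMk S n ρ q δ (GF S n (k + 1))) := by
  by_cases h : k < n - 1
  · rw [GF_succ k h]
    have := mk_rel (AffRel.y_g_comm (S := S) (n := n) (ρ := ρ) (q := q) (δ := δ) ⟨k, h⟩ hk)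
    simp only [map_mul] at this
    exact this
  · rw [GF_junk k h, map_one]
    exact Commute.one_right _

private lemma gG0 (i k : ℕ) (h : i + 2 ≤ k) :
    Commute (affMk S n ρ q δ (GF S n (i + 1))) (affMk S n ρ q δ (GF S n (k + 1))) := by
  by_cases hi : i < n - 1
  · by_cases hk : k < n - 1
    · rw [GF_succ i hi, GF_succ k hk]
      have := mk_rel (AffRel.gg_comm (S := S) (n := n) (ρ := ρ) (q := q) (δ := δ) ⟨i, hi⟩ ⟨k, hk⟩ h)
      simp only [map_mul] at this
      exact this
    · rw [GF_junk k hk, map_one]; exact Commute.one_right _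
  · rw [GF_junk i hi, map_one]; exact Commute.one_left _

private lemma xG0 : ∀ (j k : ℕ), j ≤ k →
    Commute (affMk S n ρ q δ (xF S n ρ j)) (affMk S n ρ q δ (GF S n (k + 1)))
  | 0, k, _ => by
      show Commute (affMk S n ρ q δ 1) _
      rw [map_one]; exact Commute.one_left _
  | 1, k, h => by
      show Commute (affMk S n ρ q δ (Cf S n ((ρ⁻¹ : Sˣ) : S) * Yf S n)) _
      rw [map_mul]
      exact (Cf_central _ _).mul_left (yG0 k h)
  | (j + 2), k, h => by
      show Commute (affMk S n ρ q δ
        (GF S n (j + 1) * xF S n ρ (j + 1) * GF S n (j + 1))) _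
      rw [map_mul, map_mul]
      exact ((gG0 j k (by omega)).mul_left (xG0 (j + 1) k (by omega))).mul_left
        (gG0 j k (by omega))

private lemma braid0 (k : ℕ) (h : k + 1 < n - 1) :
    affMk S n ρ q δ (GF S n (k + 1)) * (affMk S n ρ q δ (GF S n (k + 2)) *
      affMk S n ρ q δ (GF S n (k + 1))) =
    affMk S n ρ q δ (GF S n (k + 2)) * (affMk S n ρ q δ (GF S n (k + 1)) *
      affMk S n ρ q δ (GF S n (k + 2))) := by
  rw [GF_succ k (Nat.lt_of_succ_lt h), (by exact GF_succ (k + 1) h :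
    GF S n (k + 2) = Gf S n ⟨k + 1, h⟩)]
  have := mk_rel (AffRel.braid (S := S) (n := n) (ρ := ρ) (q := q) (δ := δ) k h)
  simp only [map_mul] at this
  simpa [mul_assoc] using this

/-- Abstract braid-type word computation. -/
private lemma key {A : Type} [Monoid A] (a b x : A)
    (hbr : a * (b * a) = b * (a * b))
    (hxb : x * b = b * x)
    (hx : x * (a * (x * a)) = a * (x * (a * x))) :
    a * x * a * b * (a * x * a) * b = b * (a * x * a) * b * (a * x * a) := by
  have Rbr : ∀ t : A, a * (b * (a * t)) = b * (a * (b * t)) := fun t => by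
    have h1 : a * (b * (a * t)) = a * (b * a) * t := by simp [mul_assoc]
    have h2 : b * (a * (b * t)) = b * (a * b) * t := by simp [mul_assoc]
    rw [h1, h2, hbr]
  have Rxb : ∀ t : A, x * (b * t) = b * (x * t) := fun t => by
    rw [← mul_assoc, hxb, mul_assoc]
  have Rxb' : ∀ t : A, b * (x * t) = x * (b * t) := fun t => (Rxb t).symm
  have Rx : ∀ t : A, x * (a * (x * (a * t))) = a * (x * (a * (x * t))) := fun t => by
    have h1 : x * (a * (x * (a * t))) = x * (a * (x * a)) * t := by simp [mul_assoc]
    have h2 : a * (x * (a * (x * t))) = a * (x * (a * x)) * t := by simp [mul_assoc]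
    rw [h1, h2, hx]
  have main : a * (x * (a * (b * (a * (x * (a * b)))))) =
      b * (a * (x * (a * (b * (a * (x * a)))))) := by
    calc a * (x * (a * (b * (a * (x * (a * b))))))
        = a * (x * (b * (a * (b * (x * (a * b)))))) := by rw [Rbr (x * (a * b))]
      _ = a * (b * (x * (a * (b * (x * (a * b)))))) := by
            rw [Rxb (a * (b * (x * (a * b))))]
      _ = a * (b * (x * (a * (x * (b * (a * b)))))) := by rw [Rxb' (a * b)]
      _ = a * (b * (x * (a * (x * (a * (b * a)))))) := by rw [← hbr]
      _ = a * (b * (a * (x * (a * (x * (b * a)))))) := by rw [Rx (b * a)]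
      _ = a * (b * (a * (x * (a * (b * (x * a)))))) := by rw [Rxb a]
      _ = b * (a * (b * (x * (a * (b * (x * a)))))) := by
            rw [Rbr (x * (a * (b * (x * a))))]
      _ = b * (a * (x * (b * (a * (b * (x * a)))))) := by rw [Rxb' (a * (b * (x * a)))]
      _ = b * (a * (x * (a * (b * (a * (x * a)))))) := by rw [← Rbr (x * a)]
  calc a * x * a * b * (a * x * a) * b
      = a * (x * (a * (b * (a * (x * (a * b)))))) := by simp [mul_assoc]
    _ = b * (a * (x * (a * (b * (a * (x * a)))))) := main
    _ = b * (a * x * a) * b * (a * x * a) := by simp [mul_assoc]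

private lemma xbraid : ∀ j : ℕ,
    affMk S n ρ q δ (xF S n ρ (j + 1)) * affMk S n ρ q δ (GF S n (j + 1)) *
      affMk S n ρ q δ (xF S n ρ (j + 1)) * affMk S n ρ q δ (GF S n (j + 1)) =
    affMk S n ρ q δ (GF S n (j + 1)) * affMk S n ρ q δ (xF S n ρ (j + 1)) *
      affMk S n ρ q δ (GF S n (j + 1)) * affMk S n ρ q δ (xF S n ρ (j + 1))
  | 0 => by
      by_cases h : 0 < n - 1
      · have hx1 : affMk S n ρ q δ (xF S n ρ 1) =
            ((ρ⁻¹ : Sˣ) : S) • affMk S n ρ q δ (Yf S n) := by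
          have hcf : affMk S n ρ q δ (Cf S n ((ρ⁻¹ : Sˣ) : S)) =
              algebraMap S (AffBMW S n ρ q δ) ((ρ⁻¹ : Sˣ) : S) :=
            (affMk S n ρ q δ).commutes _
          show affMk S n ρ q δ (Cf S n ((ρ⁻¹ : Sˣ) : S) * Yf S n) = _
          rw [map_mul, hcf, Algebra.smul_def]
        have YB := mk_rel (AffRel.y_braid (S := S) (n := n) (ρ := ρ) (q := q) (δ := δ) h)
        simp only [map_mul] at YB
        rw [GF_succ 0 h, hx1]
        simp only [smul_mul_assoc, mul_smul_comm, smul_smul]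
        rw [YB]
      · rw [GF_junk 0 h, map_one]; simp
  | (j + 1) => by
      by_cases h : j + 1 < n - 1
      · have hG : affMk S n ρ q δ (xF S n ρ (j + 2)) =
            affMk S n ρ q δ (GF S n (j + 1)) * affMk S n ρ q δ (xF S n ρ (j + 1)) *
              affMk S n ρ q δ (GF S n (j + 1)) := by
          show affMk S n ρ q δ
            (GF S n (j + 1) * xF S n ρ (j + 1) * GF S n (j + 1)) = _
          rw [map_mul, map_mul]
        rw [hG]
        have hx := xbraid j
        have hxb := (xG0 (S := S) (n := n) (ρ := ρ) (q := q) (δ := δ) (j + 1) (j + 1) le_rfl).eq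
        exact key (affMk S n ρ q δ (GF S n (j + 1))) (affMk S n ρ q δ (GF S n (j + 2)))
          (affMk S n ρ q δ (xF S n ρ (j + 1))) (braid0 j h)
          hxb (by simpa [mul_assoc] using hx)
      · rw [GF_junk (j + 1) h, map_one]; simp

private lemma xcomm : ∀ (d i : ℕ),
    Commute (affMk S n ρ q δ (xF S n ρ (i + 1))) (affMk S n ρ q δ (xF S n ρ (i + 1 + d)))
  | 0, i => Commute.refl _
  | 1, i => by
      have hx := xbraid (S := S) (n := n) (ρ := ρ) (q := q) (δ := δ) i
      have hG : affMk S n ρ q δ (xF S n ρ (i + 2)) =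
          affMk S n ρ q δ (GF S n (i + 1)) * affMk S n ρ q δ (xF S n ρ (i + 1)) *
            affMk S n ρ q δ (GF S n (i + 1)) := by
        show affMk S n ρ q δ
          (GF S n (i + 1) * xF S n ρ (i + 1) * GF S n (i + 1)) = _
        rw [map_mul, map_mul]
      show Commute _ (affMk S n ρ q δ (xF S n ρ (i + 2)))
      rw [hG]
      show affMk S n ρ q δ (xF S n ρ (i + 1)) *
          (affMk S n ρ q δ (GF S n (i + 1)) * affMk S n ρ q δ (xF S n ρ (i + 1)) *
            affMk S n ρ q δ (GF S n (i + 1))) =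
        affMk S n ρ q δ (GF S n (i + 1)) * affMk S n ρ q δ (xF S n ρ (i + 1)) *
          affMk S n ρ q δ (GF S n (i + 1)) * affMk S n ρ q δ (xF S n ρ (i + 1))
      rw [← hx]
      simp [mul_assoc]
  | (d + 2), i => by
      have hrec := xcomm (d + 1) i
      have hGc : Commute (affMk S n ρ q δ (xF S n ρ (i + 1)))
          (affMk S n ρ q δ (GF S n (i + d + 1 + 1))) := xG0 (i + 1) (i + d + 1) (by omega)
      have hstep : affMk S n ρ q δ (xF S n ρ (i + 1 + (d + 2))) =
          affMk S n ρ q δ (GF S n (i + d + 1 + 1)) *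
            affMk S n ρ q δ (xF S n ρ (i + 1 + (d + 1))) *
            affMk S n ρ q δ (GF S n (i + d + 1 + 1)) := by
        rw [show i + 1 + (d + 2) = (i + d + 1) + 2 from by omega]
        show affMk S n ρ q δ
          (GF S n (i + d + 1 + 1) * xF S n ρ (i + d + 1 + 1) * GF S n (i + d + 1 + 1)) = _
        rw [map_mul, map_mul, show i + 1 + (d + 1) = i + d + 1 + 1 from by omega]
      rw [hstep]
      exact (hGc.mul_right hrec).mul_right hGc

end AuxX

/-- In the affine BMW algebra `W^aff_{n,S}`, the elements
`x_1, …, x_n` pairwise commute. -/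
theorem affineBMW_x_commute (S : Type) [CommRing S] (n : ℕ) (ρ q : Sˣ) (δ : ℕ → S)
    (hδ0 : IsUnit (δ 0)) (hground : GroundRel S ρ q δ)
    (i j : ℕ) (hi1 : 1 ≤ i) (hin : i ≤ n) (hj1 : 1 ≤ j) (hjn : j ≤ n) :
    affMk S n ρ q δ (xF S n ρ i) * affMk S n ρ q δ (xF S n ρ j) =
      affMk S n ρ q δ (xF S n ρ j) * affMk S n ρ q δ (xF S n ρ i) := by
  rcases le_total i j with hij | hij
  · obtain ⟨i', rfl⟩ : ∃ i', i = i' + 1 := ⟨i - 1, by omega⟩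
    have h := xcomm (S := S) (n := n) (ρ := ρ) (q := q) (δ := δ) (j - (i' + 1)) i'
    rw [show i' + 1 + (j - (i' + 1)) = j from by omega] at h
    exact h.eq
  · obtain ⟨j', rfl⟩ : ∃ j', j = j' + 1 := ⟨j - 1, by omega⟩
    have h := xcomm (S := S) (n := n) (ρ := ρ) (q := q) (δ := δ) (i - (j' + 1)) j'
    rw [show j' + 1 + (i - (j' + 1)) = i from by omega] at h
    exact h.eq.symm

end
end

section
/- Fix n ≥ 1, an integer f with 0 ≤ f ≤ n/2, and set s = n − 2f. Let H ≤ S_n be the subgroup of all permutations h of {1,…,n} such that h maps the set {2f+1,…,n} to itself and maps the collection of pairs {1,2}, {3,4}, …, {2f−1,2f} to itself (that is, for each 1 ≤ i ≤ f there is 1 ≤ i' ≤ f with h({2i−1,2i}) = {2i'−1,2i'}); H is isomorphic to ((ℤ₂ × ⋯ × ℤ₂) ⋊ S_f) × S_s. Then the multiplication map D_{f,n} × H → S_n, (d, h) ↦ d∘h, is a bijection; equivalently, D_{f,n} is a complete set of left coset representatives for H in S_n. -/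
noncomputable section

open scoped BigOperators

/-- The adjacent transposition `s_{i+1}` (paper index `i+1`), i.e. the permutation of
`{1,…,n}` (modeled as `Fin n`, 0-based) swapping positions `i` and `i+1`. -/
def simpleT (n : ℕ) (i : Fin (n - 1)) : Equiv.Perm (Fin n) :=
  Equiv.swap ⟨(i : ℕ), by have := i.isLt; omega⟩ ⟨(i : ℕ) + 1, by have := i.isLt; omega⟩

/-- The permutation represented by a word in the simple transpositions. -/
def permOfWord (n : ℕ) (l : List (Fin (n - 1))) : Equiv.Perm (Fin n) :=
  (l.map (simpleT n)).prod

/-- The number of inversions (Coxeter length) of a permutation of `Fin n`. -/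
def invCount (n : ℕ) (σ : Equiv.Perm (Fin n)) : ℕ :=
  (Finset.univ.filter (fun p : Fin n × Fin n => p.1 < p.2 ∧ σ p.2 < σ p.1)).card

/-- `l` is a reduced expression for the permutation `σ`. -/
def IsReducedWord (n : ℕ) (l : List (Fin (n - 1))) (σ : Equiv.Perm (Fin n)) : Prop :=
  permOfWord n l = σ ∧ l.length = invCount n σ

/-- The set `D_{f,n}` of Enyang, written for `{1,…,n}` modeled 0-based as `Fin n`. -/
def Dfn (n f : ℕ) : Set (Equiv.Perm (Fin n)) :=
  {π | (∀ i j : Fin n, (i : ℕ) % 2 = 1 → (j : ℕ) % 2 = 1 → i < j → (j : ℕ) < 2 * f →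
          π i < π j) ∧
       (∀ i j : Fin n, (i : ℕ) % 2 = 0 → (j : ℕ) = (i : ℕ) + 1 → (j : ℕ) < 2 * f →
          π i < π j) ∧
       (∀ i j : Fin n, 2 * f ≤ (i : ℕ) → i < j → π i < π j)}


/-- Membership in the subgroup
`H ≅ ((ℤ₂ × ⋯ × ℤ₂) ⋊ S_f) × S_s ≤ S_n`:  the permutation `h` maps the last `s = n - 2f`
points to themselves and permutes the `f` blocks `{1,2}, {3,4}, …, {2f-1,2f}` (0-based:
`{0,1}, …, {2f-2,2f-1}`) among themselves. -/
def InH (n f : ℕ) (h : Equiv.Perm (Fin n)) : Prop :=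
  (∀ i : Fin n, 2 * f ≤ (i : ℕ) → 2 * f ≤ (h i : ℕ)) ∧
  (∀ i : Fin n, (i : ℕ) < 2 * f → (h i : ℕ) < 2 * f) ∧
  (∀ i j : Fin n, (i : ℕ) < 2 * f → (j : ℕ) < 2 * f →
    ((i : ℕ) / 2 = (j : ℕ) / 2 ↔ (h i : ℕ) / 2 = (h j : ℕ) / 2))


section Aux

variable {n f : ℕ}


open Finset in
/-- Two strictly monotone functions `Fin k → α` with the same image coincide. -/
lemma sm_unique {k : ℕ} {α : Type*} [LinearOrder α] [DecidableEq α] {f g : Fin k → α}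
    (hf : StrictMono f) (hg : StrictMono g)
    (him : Finset.image f Finset.univ = Finset.image g Finset.univ) : f = g := by
  have hcard : (Finset.image f Finset.univ).card = k := by
    rw [Finset.card_image_of_injective _ hf.injective, Finset.card_univ, Fintype.card_fin]
  have h1 := Finset.orderEmbOfFin_unique hcard (fun x => Finset.mem_image_of_mem f (Finset.mem_univ x)) hf
  have h2 := Finset.orderEmbOfFin_unique hcard (fun x => by
    rw [him]; exact Finset.mem_image_of_mem g (Finset.mem_univ x)) hg
  exact h1.trans h2.symm
lemma InH.one (n f : ℕ) : InH n f 1 :=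
  ⟨fun i hi => hi, fun i hi => hi, fun i j _ _ => Iff.rfl⟩

lemma InH.mul {n f : ℕ} {g h : Equiv.Perm (Fin n)} (hg : InH n f g) (hh : InH n f h) :
    InH n f (g * h) := by
  obtain ⟨g1, g2, g3⟩ := hg
  obtain ⟨h1, h2, h3⟩ := hh
  refine ⟨fun i hi => g1 _ (h1 _ hi), fun i hi => g2 _ (h2 _ hi), fun i j hi hj => ?_⟩
  exact (h3 i j hi hj).trans (g3 _ _ (h2 _ hi) (h2 _ hj))

lemma InH.inv {n f : ℕ} {h : Equiv.Perm (Fin n)} (hh : InH n f h) : InH n f h⁻¹ := by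
  obtain ⟨h1, h2, h3⟩ := hh
  have key : ∀ i : Fin n, (i : ℕ) < 2 * f → ((h⁻¹ i : Fin n) : ℕ) < 2 * f := by
    intro i hi
    by_contra hc
    have := h1 (h⁻¹ i) (le_of_not_gt hc)
    rw [show h (h⁻¹ i) = i from h.apply_symm_apply i] at this
    omega
  have key2 : ∀ i : Fin n, 2 * f ≤ (i : ℕ) → 2 * f ≤ ((h⁻¹ i : Fin n) : ℕ) := by
    intro i hi
    by_contra hc
    have := h2 (h⁻¹ i) (lt_of_not_ge hc)
    rw [show h (h⁻¹ i) = i from h.apply_symm_apply i] at this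
    omega
  refine ⟨key2, key, fun i j hi hj => ?_⟩
  have := h3 (h⁻¹ i) (h⁻¹ j) (key i hi) (key j hj)
  rw [show h (h⁻¹ i) = i from h.apply_symm_apply i, show h (h⁻¹ j) = j from h.apply_symm_apply j] at this
  exact this.symm


section Tail

def tailFun (hf : 2 * f ≤ n) (ρ : Equiv.Perm (Fin (n - 2 * f))) (i : Fin n) : Fin n :=
  if h : 2 * f ≤ (i : ℕ) then
    have hx : (i : ℕ) - 2 * f < n - 2 * f := by have := i.isLt; omega
    ⟨2 * f + (ρ ⟨(i : ℕ) - 2 * f, hx⟩ : ℕ), by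
      have := (ρ (⟨(i : ℕ) - 2 * f, hx⟩ : Fin (n - 2 * f))).isLt; omega⟩
  else i

lemma tailFun_leftInv (hf : 2 * f ≤ n) (ρ : Equiv.Perm (Fin (n - 2 * f))) (i : Fin n) :
    tailFun hf ρ⁻¹ (tailFun hf ρ i) = i := by
  unfold tailFun
  by_cases h : 2 * f ≤ (i : ℕ)
  · rw [dif_pos h]
    have hx : (i : ℕ) - 2 * f < n - 2 * f := by have := i.isLt; omega
    set k : Fin (n - 2 * f) := ⟨(i : ℕ) - 2 * f, hx⟩ with hk
    have hle : 2 * f ≤ 2 * f + (ρ k : ℕ) := by omega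
    rw [dif_pos hle]
    have e1 : ∀ hh, (⟨2 * f + (ρ k : ℕ) - 2 * f, hh⟩ : Fin (n - 2 * f)) = ρ k := by
      intro hh; apply Fin.ext; simp
    apply Fin.ext
    have e2 : ∀ (x : Fin (n - 2 * f)) (hh : 2 * f + (ρ x : ℕ) - 2 * f < n - 2 * f),
        ρ.symm ⟨2 * f + (ρ x : ℕ) - 2 * f, hh⟩ = x := by
      intro x hh; rw [Equiv.symm_apply_eq]; apply Fin.ext; simp
    simp only [e1, Equiv.Perm.inv_def, Equiv.symm_apply_apply, hk, e2, Fin.val_mk]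
    omega
  · rw [dif_neg h, dif_neg h]

/-- The permutation of `Fin n` fixing the head pointwise and permuting the tail by `ρ`. -/
def tailPerm (hf : 2 * f ≤ n) (ρ : Equiv.Perm (Fin (n - 2 * f))) : Equiv.Perm (Fin n) where
  toFun := tailFun hf ρ
  invFun := tailFun hf ρ⁻¹
  left_inv := tailFun_leftInv hf ρ
  right_inv := by have := tailFun_leftInv hf ρ⁻¹; intro i; simpa using this i

lemma tailPerm_apply_head (hf : 2 * f ≤ n) (ρ : Equiv.Perm (Fin (n - 2 * f))) (i : Fin n)
    (hi : (i : ℕ) < 2 * f) : tailPerm hf ρ i = i := by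
  show tailFun hf ρ i = i
  unfold tailFun
  rw [dif_neg (by omega)]

lemma tailPerm_apply_tail (hf : 2 * f ≤ n) (ρ : Equiv.Perm (Fin (n - 2 * f))) (k : ℕ)
    (hk : k < n - 2 * f) :
    tailPerm hf ρ ⟨2 * f + k, by omega⟩ =
      ⟨2 * f + (ρ ⟨k, hk⟩ : ℕ), by have := (ρ ⟨k, hk⟩).isLt; omega⟩ := by
  show tailFun hf ρ _ = _
  unfold tailFun
  rw [dif_pos (show 2 * f ≤ ((⟨2 * f + k, by omega⟩ : Fin n) : ℕ) by simp)]
  have e1 : ∀ hh : 2 * f + k - 2 * f < n - 2 * f, (⟨((⟨2 * f + k, by omega⟩ : Fin n) : ℕ) - 2 * f, hh⟩ : Fin (n - 2 * f)) =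
      ⟨k, hk⟩ := by
    intro hh; apply Fin.ext; simp
  apply Fin.ext
  simp only
  rw [e1]

end Tail
def flipFun (hf : 2 * f ≤ n) (σ : Equiv.Perm (Fin n)) (i : Fin n) : Fin n :=
  if h : (i : ℕ) < 2 * f then
    if σ ⟨2 * ((i : ℕ) / 2), by omega⟩ < σ ⟨2 * ((i : ℕ) / 2) + 1, by omega⟩ then i
    else ⟨2 * ((i : ℕ) / 2) + (1 - (i : ℕ) % 2), by omega⟩
  else i

lemma flipFun_invol (hf : 2 * f ≤ n) (σ : Equiv.Perm (Fin n)) :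
    Function.Involutive (flipFun hf σ) := by
  intro i
  unfold flipFun
  by_cases h : (i : ℕ) < 2 * f
  · rw [dif_pos h]
    by_cases hc : σ ⟨2 * ((i : ℕ) / 2), by omega⟩ < σ ⟨2 * ((i : ℕ) / 2) + 1, by omega⟩
    · rw [if_pos hc, dif_pos h, if_pos hc]
    · rw [if_neg hc]
      have hj : ((⟨2 * ((i : ℕ) / 2) + (1 - (i : ℕ) % 2), by omega⟩ : Fin n) : ℕ) < 2 * f := by
        simp; omega
      rw [dif_pos hj]
      have e0 : ((⟨2 * ((i : ℕ) / 2) + (1 - (i : ℕ) % 2), by omega⟩ : Fin n) : ℕ) / 2 =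
          (i : ℕ) / 2 := by simp; omega
      simp only [e0]
      rw [if_neg hc]
      apply Fin.ext
      simp
      omega
  · rw [dif_neg h, dif_neg h]

/-- The permutation reordering each block `{2k,2k+1}` so that `σ` becomes increasing on it. -/
def flipPerm (hf : 2 * f ≤ n) (σ : Equiv.Perm (Fin n)) : Equiv.Perm (Fin n) :=
  (flipFun_invol hf σ).toPerm _
lemma flipPerm_block (hf : 2 * f ≤ n) (σ : Equiv.Perm (Fin n)) (k : ℕ) (hk : k < f) :
    σ (flipPerm hf σ ⟨2 * k, by omega⟩) < σ (flipPerm hf σ ⟨2 * k + 1, by omega⟩) := by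
  have h0 : flipPerm hf σ ⟨2 * k, by omega⟩ = flipFun hf σ ⟨2 * k, by omega⟩ := rfl
  have h1 : flipPerm hf σ ⟨2 * k + 1, by omega⟩ = flipFun hf σ ⟨2 * k + 1, by omega⟩ := rfl
  have c0 : (2 : ℕ) * k < 2 * f := by omega
  have c1 : (2 : ℕ) * k + 1 < 2 * f := by omega
  rw [h0, h1]
  unfold flipFun
  rw [dif_pos c0, dif_pos c1]
  simp only [Fin.val_mk]
  have e0 : 2 * k / 2 = k := by omega
  have e1 : (2 * k + 1) / 2 = k := by omega
  have e2 : 2 * k % 2 = 0 := by omega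
  have e3 : (2 * k + 1) % 2 = 1 := by omega
  simp only [e0, e1, e2, e3]
  norm_num
  split
  · assumption
  · rename_i hc
    refine lt_of_le_of_ne (not_lt.mp hc) (fun hcontra => ?_)
    have := σ.injective hcontra
    simp [Fin.ext_iff] at this

lemma flipPerm_head (hf : 2 * f ≤ n) (σ : Equiv.Perm (Fin n)) (i : Fin n)
    (hi : (i : ℕ) < 2 * f) :
    ((flipPerm hf σ i : Fin n) : ℕ) < 2 * f ∧
      ((flipPerm hf σ i : Fin n) : ℕ) / 2 = (i : ℕ) / 2 := by
  have h0 : flipPerm hf σ i = flipFun hf σ i := rfl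
  rw [h0]
  unfold flipFun
  rw [dif_pos hi]
  split
  · exact ⟨hi, rfl⟩
  · simp only [Fin.val_mk]
    omega

lemma flipPerm_tail (hf : 2 * f ≤ n) (σ : Equiv.Perm (Fin n)) (i : Fin n)
    (hi : 2 * f ≤ (i : ℕ)) : flipPerm hf σ i = i := by
  have h0 : flipPerm hf σ i = flipFun hf σ i := rfl
  rw [h0]
  unfold flipFun
  rw [dif_neg (by omega)]
section Block

/-- underlying function of the block permutation -/
def blockFun (hf : 2 * f ≤ n) (τ : Equiv.Perm (Fin f)) (i : Fin n) : Fin n :=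
  if h : (i : ℕ) < 2 * f then
    have hx : (i : ℕ) / 2 < f := by omega
    ⟨2 * (τ ⟨(i : ℕ) / 2, hx⟩ : ℕ) + (i : ℕ) % 2, by
      have := (τ (⟨(i : ℕ) / 2, hx⟩ : Fin f)).isLt; omega⟩
  else i

lemma blockFun_leftInv (hf : 2 * f ≤ n) (τ : Equiv.Perm (Fin f)) (i : Fin n) :
    blockFun hf τ⁻¹ (blockFun hf τ i) = i := by
  unfold blockFun
  by_cases h : (i : ℕ) < 2 * f
  · rw [dif_pos h]
    have hx : (i : ℕ) / 2 < f := by omega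
    set k : Fin f := ⟨(i : ℕ) / 2, hx⟩ with hk
    have hlt : 2 * (τ k : ℕ) + (i : ℕ) % 2 < 2 * f := by
      have := (τ k).isLt; omega
    rw [dif_pos hlt]
    have e1 : (⟨(2 * (τ k : ℕ) + (i : ℕ) % 2) / 2, by omega⟩ : Fin f) = τ k := by
      apply Fin.ext; simp; omega
    apply Fin.ext
    have e3 : ∀ (x : Fin f) (hh : (2 * (τ x : ℕ) + (i : ℕ) % 2) / 2 < f),
        τ.symm ⟨(2 * (τ x : ℕ) + (i : ℕ) % 2) / 2, hh⟩ = x := by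
      intro x hh; rw [Equiv.symm_apply_eq]; apply Fin.ext; simp; omega
    simp only [e1, Equiv.Perm.inv_def, Equiv.symm_apply_apply, e3, Fin.val_mk]
    have : (2 * (τ k : ℕ) + (i : ℕ) % 2) % 2 = (i : ℕ) % 2 := by omega
    omega
  · rw [dif_neg h, dif_neg h]

/-- The permutation of `Fin n` permuting the `f` blocks `{0,1},…,{2f-2,2f-1}` according
to `τ`. -/
def blockPerm (hf : 2 * f ≤ n) (τ : Equiv.Perm (Fin f)) : Equiv.Perm (Fin n) where
  toFun := blockFun hf τ
  invFun := blockFun hf τ⁻¹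
  left_inv := blockFun_leftInv hf τ
  right_inv := by
    have := blockFun_leftInv hf τ⁻¹
    intro i; simpa using this i

lemma blockPerm_apply (hf : 2 * f ≤ n) (τ : Equiv.Perm (Fin f)) (k r : ℕ) (hk : k < f)
    (hr : r < 2) :
    blockPerm hf τ ⟨2 * k + r, by omega⟩ =
      ⟨2 * (τ ⟨k, hk⟩ : ℕ) + r, by have := (τ ⟨k, hk⟩).isLt; omega⟩ := by
  show blockFun hf τ _ = _
  unfold blockFun
  rw [dif_pos (show ((⟨2 * k + r, by omega⟩ : Fin n) : ℕ) < 2 * f by simp; omega)]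
  apply Fin.ext
  simp only
  have e1 : ∀ hh : (2 * k + r) / 2 < f, (⟨((⟨2 * k + r, by omega⟩ : Fin n) : ℕ) / 2, hh⟩ : Fin f) = ⟨k, hk⟩ := by
    intro hh; apply Fin.ext; simp; omega
  rw [e1]
  simp; omega

end Block

section InHlemmas

lemma blockPerm_tail (hf : 2 * f ≤ n) (τ : Equiv.Perm (Fin f)) (i : Fin n)
    (hi : 2 * f ≤ (i : ℕ)) : blockPerm hf τ i = i := by
  show blockFun hf τ i = i
  unfold blockFun
  rw [dif_neg (by omega)]

lemma blockPerm_head_val (hf : 2 * f ≤ n) (τ : Equiv.Perm (Fin f)) (i : Fin n)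
    (hi : (i : ℕ) < 2 * f) (hh : (i : ℕ) / 2 < f) :
    ((blockPerm hf τ i : Fin n) : ℕ) = 2 * (τ ⟨(i : ℕ) / 2, hh⟩ : ℕ) + (i : ℕ) % 2 := by
  show ((blockFun hf τ i : Fin n) : ℕ) = _
  unfold blockFun
  rw [dif_pos hi]

lemma InH_flipPerm (hf : 2 * f ≤ n) (σ : Equiv.Perm (Fin n)) : InH n f (flipPerm hf σ) := by
  refine ⟨fun i hi => ?_, fun i hi => (flipPerm_head hf σ i hi).1, fun i j hi hj => ?_⟩
  · rw [flipPerm_tail hf σ i hi]; exact hi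
  · rw [(flipPerm_head hf σ i hi).2, (flipPerm_head hf σ j hj).2]

lemma InH_blockPerm (hf : 2 * f ≤ n) (τ : Equiv.Perm (Fin f)) : InH n f (blockPerm hf τ) := by
  have hv : ∀ i : Fin n, (hi : (i : ℕ) < 2 * f) →
      ((blockPerm hf τ i : Fin n) : ℕ) = 2 * (τ ⟨(i : ℕ) / 2, by omega⟩ : ℕ) + (i : ℕ) % 2 :=
    fun i hi => blockPerm_head_val hf τ i hi (by omega)
  refine ⟨fun i hi => ?_, fun i hi => ?_, fun i j hi hj => ?_⟩
  · rw [blockPerm_tail hf τ i hi]; exact hi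
  · rw [hv i hi]
    have := (τ (⟨(i : ℕ) / 2, by omega⟩ : Fin f)).isLt
    omega
  · rw [hv i hi, hv j hj]
    constructor
    · intro hij
      have : (⟨(i : ℕ) / 2, by omega⟩ : Fin f) = ⟨(j : ℕ) / 2, by omega⟩ := Fin.ext hij
      rw [this]
      omega
    · intro hij
      have h2 : (τ (⟨(i : ℕ) / 2, by omega⟩ : Fin f) : ℕ) =
          (τ (⟨(j : ℕ) / 2, by omega⟩ : Fin f) : ℕ) := by omega
      have h3 := τ.injective (Fin.ext h2)
      simpa using congrArg Fin.val h3

lemma tailPerm_tail_le (hf : 2 * f ≤ n) (ρ : Equiv.Perm (Fin (n - 2 * f))) (i : Fin n)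
    (hi : 2 * f ≤ (i : ℕ)) : 2 * f ≤ ((tailPerm hf ρ i : Fin n) : ℕ) := by
  show 2 * f ≤ ((tailFun hf ρ i : Fin n) : ℕ)
  unfold tailFun
  rw [dif_pos hi]
  simp only [Fin.val_mk]
  omega

lemma InH_tailPerm (hf : 2 * f ≤ n) (ρ : Equiv.Perm (Fin (n - 2 * f))) :
    InH n f (tailPerm hf ρ) := by
  refine ⟨fun i hi => tailPerm_tail_le hf ρ i hi, fun i hi => ?_, fun i j hi hj => ?_⟩
  · rw [tailPerm_apply_head hf ρ i hi]; exact hi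
  · rw [tailPerm_apply_head hf ρ i hi, tailPerm_apply_head hf ρ j hj]

end InHlemmas

/-- the `m`-th tail position -/
def tailPos (hf : 2 * f ≤ n) (m : Fin (n - 2 * f)) : Fin n :=
  ⟨2 * f + (m : ℕ), by have := m.isLt; omega⟩

/-- the odd position of the `k`-th block -/
def oddPos (hf : 2 * f ≤ n) (k : Fin f) : Fin n :=
  ⟨2 * (k : ℕ) + 1, by have := k.isLt; omega⟩

/-- the even position of the `k`-th block -/
def evenPos (hf : 2 * f ≤ n) (k : Fin f) : Fin n :=
  ⟨2 * (k : ℕ), by have := k.isLt; omega⟩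

@[simp] lemma tailPos_val (hf : 2 * f ≤ n) (m : Fin (n - 2 * f)) :
    (tailPos hf m : ℕ) = 2 * f + (m : ℕ) := rfl

@[simp] lemma oddPos_val (hf : 2 * f ≤ n) (k : Fin f) :
    (oddPos hf k : ℕ) = 2 * (k : ℕ) + 1 := rfl

@[simp] lemma evenPos_val (hf : 2 * f ≤ n) (k : Fin f) :
    (evenPos hf k : ℕ) = 2 * (k : ℕ) := rfl

/-- index of a tail position -/
def tailIdx (hf : 2 * f ≤ n) (x : Fin n) (hx : 2 * f ≤ (x : ℕ)) : Fin (n - 2 * f) :=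
  ⟨(x : ℕ) - 2 * f, by have := x.isLt; omega⟩

/-- block index of a head position -/
def headIdx (hf : 2 * f ≤ n) (x : Fin n) (hx : (x : ℕ) < 2 * f) : Fin f :=
  ⟨(x : ℕ) / 2, by omega⟩

lemma tailPos_tailIdx (hf : 2 * f ≤ n) (x : Fin n) (hx : 2 * f ≤ (x : ℕ)) :
    tailPos hf (tailIdx hf x hx) = x := by
  apply Fin.ext; simp only [tailPos_val, tailIdx, Fin.val_mk]; omega

lemma oddPos_headIdx (hf : 2 * f ≤ n) (x : Fin n) (hx : (x : ℕ) < 2 * f)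
    (hodd : (x : ℕ) % 2 = 1) : oddPos hf (headIdx hf x hx) = x := by
  apply Fin.ext; simp only [oddPos_val, headIdx, Fin.val_mk]; omega

lemma evenPos_headIdx (hf : 2 * f ≤ n) (x : Fin n) (hx : (x : ℕ) < 2 * f)
    (heven : (x : ℕ) % 2 = 0) : evenPos hf (headIdx hf x hx) = x := by
  apply Fin.ext; simp only [evenPos_val, headIdx, Fin.val_mk]; omega

/-- the sequence of values of `d` on the tail -/
def tailSeq (hf : 2 * f ≤ n) (d : Equiv.Perm (Fin n)) : Fin (n - 2 * f) → Fin n :=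
  fun m => d (tailPos hf m)

/-- the sequence of values of `d` at odd head positions -/
def maxSeq (hf : 2 * f ≤ n) (d : Equiv.Perm (Fin n)) : Fin f → Fin n :=
  fun k => d (oddPos hf k)

lemma tailSeq_strictMono (hf : 2 * f ≤ n) {d : Equiv.Perm (Fin n)} (hd : d ∈ Dfn n f) :
    StrictMono (tailSeq hf d) := by
  intro a b hab
  rw [Fin.lt_def] at hab
  exact hd.2.2 (tailPos hf a) (tailPos hf b) (by simp only [tailPos_val]; omega)
    (by rw [Fin.lt_def]; simp only [tailPos_val]; omega)

lemma maxSeq_strictMono (hf : 2 * f ≤ n) {d : Equiv.Perm (Fin n)} (hd : d ∈ Dfn n f) :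
    StrictMono (maxSeq hf d) := by
  intro a b hab
  have hbf := b.isLt
  rw [Fin.lt_def] at hab
  exact hd.1 (oddPos hf a) (oddPos hf b) (by simp only [oddPos_val]; omega)
    (by simp only [oddPos_val]; omega)
    (by rw [Fin.lt_def]; simp only [oddPos_val]; omega) (by simp only [oddPos_val]; omega)

lemma h_eq_one (hf : 2 * f ≤ n) {d1 d2 h : Equiv.Perm (Fin n)}
    (hd1 : d1 ∈ Dfn n f) (hd2 : d2 ∈ Dfn n f) (hh : InH n f h)
    (heq : ∀ i, d2 i = d1 (h i)) : h = 1 := by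
  obtain ⟨H1, H2, H3⟩ := hh
  have hT1 := tailSeq_strictMono hf hd1
  have hT2 := tailSeq_strictMono hf hd2
  have hM1 := maxSeq_strictMono hf hd1
  have hM2 := maxSeq_strictMono hf hd2
  obtain ⟨A1, A2, A3⟩ := hd1
  obtain ⟨B1, B2, B3⟩ := hd2
  -- tail part
  have hsub : Finset.image (tailSeq hf d2) Finset.univ ⊆
      Finset.image (tailSeq hf d1) Finset.univ := by
    intro v hv
    obtain ⟨m, -, rfl⟩ := Finset.mem_image.mp hv
    have hxle : 2 * f ≤ (h (tailPos hf m) : ℕ) := H1 _ (by simp only [tailPos_val, oddPos_val, evenPos_val, Fin.val_mk]; omega)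
    refine Finset.mem_image.mpr ⟨tailIdx hf (h (tailPos hf m)) hxle, Finset.mem_univ _, ?_⟩
    unfold tailSeq
    rw [heq]
    exact congrArg (⇑d1) (tailPos_tailIdx hf _ hxle)
  have him : Finset.image (tailSeq hf d2) Finset.univ =
      Finset.image (tailSeq hf d1) Finset.univ := by
    apply Finset.eq_of_subset_of_card_le hsub
    rw [Finset.card_image_of_injective _ hT1.injective,
        Finset.card_image_of_injective _ hT2.injective]
  have hTtail : ∀ m : Fin (n - 2 * f), h (tailPos hf m) = tailPos hf m := by
    intro m
    have h0 := congrFun (sm_unique hT2 hT1 him) m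
    unfold tailSeq at h0
    rw [heq] at h0
    exact d1.injective h0
  -- block maxima
  have hodd : ∀ k : Fin f, ((h (oddPos hf k) : Fin n) : ℕ) % 2 = 1 := by
    intro k
    by_contra hpar
    have hkf := k.isLt
    have hxlt : ((h (oddPos hf k) : Fin n) : ℕ) < 2 * f := H2 _ (by simp only [tailPos_val, oddPos_val, evenPos_val, Fin.val_mk]; omega)
    have hylt : ((h (evenPos hf k) : Fin n) : ℕ) < 2 * f := H2 _ (by simp only [tailPos_val, oddPos_val, evenPos_val, Fin.val_mk]; omega)
    have hdiv : ((h (evenPos hf k) : Fin n) : ℕ) / 2 = ((h (oddPos hf k) : Fin n) : ℕ) / 2 :=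
      (H3 (evenPos hf k) (oddPos hf k) (by simp only [tailPos_val, oddPos_val, evenPos_val, Fin.val_mk]; omega) (by simp only [tailPos_val, oddPos_val, evenPos_val, Fin.val_mk]; omega)).mp
        (by simp only [tailPos_val, oddPos_val, evenPos_val, Fin.val_mk]; omega)
    have hne : ((h (evenPos hf k) : Fin n) : ℕ) ≠ ((h (oddPos hf k) : Fin n) : ℕ) := by
      intro hcon
      have := h.injective (Fin.ext hcon)
      rw [Fin.ext_iff] at this
      simp only [tailPos_val, oddPos_val, evenPos_val, Fin.val_mk] at this
      omega
    set m := ((h (oddPos hf k) : Fin n) : ℕ) / 2 with hmdef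
    have hmf : m < f := by omega
    have hxeq : h (oddPos hf k) = evenPos hf ⟨m, hmf⟩ := Fin.ext (by simp only [tailPos_val, oddPos_val, evenPos_val, Fin.val_mk]; omega)
    have hyeq : h (evenPos hf k) = oddPos hf ⟨m, hmf⟩ := Fin.ext (by simp only [tailPos_val, oddPos_val, evenPos_val, Fin.val_mk]; omega)
    have hd2lt : d2 (evenPos hf k) < d2 (oddPos hf k) :=
      B2 _ _ (by simp only [tailPos_val, oddPos_val, evenPos_val, Fin.val_mk]; omega) (by simp only [tailPos_val, oddPos_val, evenPos_val, Fin.val_mk]) (by simp only [tailPos_val, oddPos_val, evenPos_val, Fin.val_mk]; omega)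
    have hd1lt : d1 (evenPos hf ⟨m, hmf⟩) < d1 (oddPos hf ⟨m, hmf⟩) :=
      A2 _ _ (by simp only [tailPos_val, oddPos_val, evenPos_val, Fin.val_mk]; omega) (by simp only [tailPos_val, oddPos_val, evenPos_val, Fin.val_mk]) (by simp only [tailPos_val, oddPos_val, evenPos_val, Fin.val_mk]; omega)
    rw [heq, heq, hxeq, hyeq] at hd2lt
    exact absurd hd1lt (lt_asymm hd2lt)
  have hsubM : Finset.image (maxSeq hf d2) Finset.univ ⊆
      Finset.image (maxSeq hf d1) Finset.univ := by
    intro v hv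
    obtain ⟨k, -, rfl⟩ := Finset.mem_image.mp hv
    have hkf := k.isLt
    have hxlt : ((h (oddPos hf k) : Fin n) : ℕ) < 2 * f := H2 _ (by simp only [tailPos_val, oddPos_val, evenPos_val, Fin.val_mk]; omega)
    have hxodd := hodd k
    refine Finset.mem_image.mpr ⟨headIdx hf (h (oddPos hf k)) hxlt, Finset.mem_univ _, ?_⟩
    unfold maxSeq
    rw [heq]
    exact congrArg (⇑d1) (oddPos_headIdx hf _ hxlt hxodd)
  have himM : Finset.image (maxSeq hf d2) Finset.univ =
      Finset.image (maxSeq hf d1) Finset.univ := by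
    apply Finset.eq_of_subset_of_card_le hsubM
    rw [Finset.card_image_of_injective _ hM1.injective,
        Finset.card_image_of_injective _ hM2.injective]
  have hModd : ∀ k : Fin f, h (oddPos hf k) = oddPos hf k := by
    intro k
    have h0 := congrFun (sm_unique hM2 hM1 himM) k
    unfold maxSeq at h0
    rw [heq] at h0
    exact d1.injective h0
  have hMeven : ∀ k : Fin f, h (evenPos hf k) = evenPos hf k := by
    intro k
    have hkf := k.isLt
    have hylt : ((h (evenPos hf k) : Fin n) : ℕ) < 2 * f := H2 _ (by simp only [tailPos_val, oddPos_val, evenPos_val, Fin.val_mk]; omega)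
    have hdiv : ((h (evenPos hf k) : Fin n) : ℕ) / 2 = (k : ℕ) := by
      have h2 := (H3 (evenPos hf k) (oddPos hf k) (by simp only [tailPos_val, oddPos_val, evenPos_val, Fin.val_mk]; omega) (by simp only [tailPos_val, oddPos_val, evenPos_val, Fin.val_mk]; omega)).mp
        (by simp only [tailPos_val, oddPos_val, evenPos_val, Fin.val_mk]; omega)
      rw [hModd k] at h2
      simp at h2
      omega
    have hnev : ((h (evenPos hf k) : Fin n) : ℕ) ≠ 2 * (k : ℕ) + 1 := by
      intro hcon
      have hc2 : h (evenPos hf k) = h (oddPos hf k) := by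
        rw [hModd k]; exact Fin.ext (by simp only [tailPos_val, oddPos_val, evenPos_val, Fin.val_mk]; omega)
      have := h.injective hc2
      rw [Fin.ext_iff] at this
      simp only [tailPos_val, oddPos_val, evenPos_val, Fin.val_mk] at this
      omega
    exact Fin.ext (by simp only [tailPos_val, oddPos_val, evenPos_val, Fin.val_mk]; omega)
  -- conclude
  ext i
  simp only [Equiv.Perm.coe_one, id_eq]
  by_cases hi : (i : ℕ) < 2 * f
  · by_cases hpar : (i : ℕ) % 2 = 0
    · rw [← evenPos_headIdx hf i hi hpar]
      exact congrArg Fin.val (hMeven _)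
    · rw [← oddPos_headIdx hf i hi (by omega)]
      exact congrArg Fin.val (hModd _)
  · rw [← tailPos_tailIdx hf i (by omega)]
    exact congrArg Fin.val (hTtail _)

section Construction

variable (hf : 2 * f ≤ n) (σ : Equiv.Perm (Fin n))

/-- first stage: make each block increasing -/
def sigma1 : Equiv.Perm (Fin n) := σ * flipPerm hf σ

lemma sigma1_block (k : Fin f) : sigma1 hf σ (evenPos hf k) < sigma1 hf σ (oddPos hf k) :=
  flipPerm_block hf σ (k : ℕ) k.isLt

/-- the sequence of block maxima after stage one -/
def gSeq : Fin f → Fin n := fun k => sigma1 hf σ (oddPos hf k)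

/-- second stage: sort the blocks -/
def sigma2 : Equiv.Perm (Fin n) := sigma1 hf σ * blockPerm hf (Tuple.sort (gSeq hf σ))

/-- the sequence of tail values after stage two -/
def tSeq : Fin (n - 2 * f) → Fin n := fun m => sigma2 hf σ (tailPos hf m)

/-- the coset representative of `σ` -/
def dOf : Equiv.Perm (Fin n) := sigma2 hf σ * tailPerm hf (Tuple.sort (tSeq hf σ))

/-- the subgroup element of `σ` -/
def hOf : Equiv.Perm (Fin n) :=
  (flipPerm hf σ * blockPerm hf (Tuple.sort (gSeq hf σ)) *
    tailPerm hf (Tuple.sort (tSeq hf σ)))⁻¹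

lemma hOf_InH : InH n f (hOf hf σ) :=
  InH.inv (InH.mul (InH.mul (InH_flipPerm hf σ) (InH_blockPerm hf _)) (InH_tailPerm hf _))

lemma dOf_mul_hOf : dOf hf σ * hOf hf σ = σ := by
  unfold dOf hOf sigma2 sigma1
  group

lemma blockPerm_oddPos (τ : Equiv.Perm (Fin f)) (k : Fin f) :
    blockPerm hf τ (oddPos hf k) = oddPos hf (τ k) :=
  (blockPerm_apply hf τ (k : ℕ) 1 k.isLt (by omega)).trans
    (Fin.ext (by simp only [Fin.val_mk, oddPos_val, Fin.eta]))

lemma blockPerm_evenPos (τ : Equiv.Perm (Fin f)) (k : Fin f) :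
    blockPerm hf τ (evenPos hf k) = evenPos hf (τ k) :=
  (blockPerm_apply hf τ (k : ℕ) 0 k.isLt (by omega)).trans
    (Fin.ext (by simp only [Fin.val_mk, evenPos_val, Fin.eta]; omega))

lemma tailPerm_tailPos (ρ : Equiv.Perm (Fin (n - 2 * f))) (m : Fin (n - 2 * f)) :
    tailPerm hf ρ (tailPos hf m) = tailPos hf (ρ m) :=
  (tailPerm_apply_tail hf ρ (m : ℕ) m.isLt).trans
    (Fin.ext (by simp only [Fin.val_mk, tailPos_val, Fin.eta]))

lemma dOf_oddPos (k : Fin f) :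
    dOf hf σ (oddPos hf k) = gSeq hf σ (Tuple.sort (gSeq hf σ) k) := by
  have h1 : dOf hf σ (oddPos hf k) =
      sigma2 hf σ (tailPerm hf (Tuple.sort (tSeq hf σ)) (oddPos hf k)) := rfl
  rw [h1, tailPerm_apply_head hf _ _ (by simp only [oddPos_val]; have := k.isLt; omega)]
  have h2 : sigma2 hf σ (oddPos hf k) =
      sigma1 hf σ (blockPerm hf (Tuple.sort (gSeq hf σ)) (oddPos hf k)) := rfl
  rw [h2, blockPerm_oddPos]
  rfl

lemma dOf_evenPos (k : Fin f) :
    dOf hf σ (evenPos hf k) = sigma1 hf σ (evenPos hf (Tuple.sort (gSeq hf σ) k)) := by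
  have h1 : dOf hf σ (evenPos hf k) =
      sigma2 hf σ (tailPerm hf (Tuple.sort (tSeq hf σ)) (evenPos hf k)) := rfl
  rw [h1, tailPerm_apply_head hf _ _ (by simp only [evenPos_val]; have := k.isLt; omega)]
  have h2 : sigma2 hf σ (evenPos hf k) =
      sigma1 hf σ (blockPerm hf (Tuple.sort (gSeq hf σ)) (evenPos hf k)) := rfl
  rw [h2, blockPerm_evenPos]

lemma dOf_tailPos (m : Fin (n - 2 * f)) :
    dOf hf σ (tailPos hf m) = tSeq hf σ (Tuple.sort (tSeq hf σ) m) := by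
  have h1 : dOf hf σ (tailPos hf m) =
      sigma2 hf σ (tailPerm hf (Tuple.sort (tSeq hf σ)) (tailPos hf m)) := rfl
  rw [h1, tailPerm_tailPos]
  rfl

lemma gSeq_strictMono : StrictMono (gSeq hf σ ∘ Tuple.sort (gSeq hf σ)) := by
  apply (Tuple.monotone_sort (gSeq hf σ)).strictMono_of_injective
  apply Function.Injective.comp _ (Tuple.sort (gSeq hf σ)).injective
  intro a b hab
  have := (sigma1 hf σ).injective hab
  unfold oddPos at this
  rw [Fin.ext_iff] at this ⊢
  simp only [Fin.val_mk] at this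
  omega

lemma tSeq_strictMono' : StrictMono (tSeq hf σ ∘ Tuple.sort (tSeq hf σ)) := by
  apply (Tuple.monotone_sort (tSeq hf σ)).strictMono_of_injective
  apply Function.Injective.comp _ (Tuple.sort (tSeq hf σ)).injective
  intro a b hab
  have := (sigma2 hf σ).injective hab
  unfold tailPos at this
  rw [Fin.ext_iff] at this ⊢
  simp only [Fin.val_mk] at this
  omega

lemma dOf_mem : dOf hf σ ∈ Dfn n f := by
  refine ⟨fun i j hi hj hij hjf => ?_, fun i j hi hj hjf => ?_, fun i j hi hij => ?_⟩
  · have hif : (i : ℕ) < 2 * f := lt_trans (Fin.lt_def.mp hij) hjf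
    rw [← oddPos_headIdx hf i hif hi, ← oddPos_headIdx hf j hjf hj,
      dOf_oddPos, dOf_oddPos]
    have : headIdx hf i hif < headIdx hf j hjf := by
      rw [Fin.lt_def] at hij ⊢
      simp only [headIdx, Fin.val_mk]
      omega
    exact gSeq_strictMono hf σ this
  · have hif : (i : ℕ) < 2 * f := by omega
    have hjodd : (j : ℕ) % 2 = 1 := by omega
    have hje : j = oddPos hf (headIdx hf i hif) := by
      apply Fin.ext
      simp only [oddPos_val, headIdx, Fin.val_mk]
      omega
    rw [← evenPos_headIdx hf i hif hi, hje, dOf_oddPos, dOf_evenPos]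
    have h3 : gSeq hf σ (Tuple.sort (gSeq hf σ) (headIdx hf i hif)) =
        sigma1 hf σ (oddPos hf (Tuple.sort (gSeq hf σ) (headIdx hf i hif))) := rfl
    rw [h3]
    exact sigma1_block hf σ _
  · have hjge : 2 * f ≤ (j : ℕ) := le_trans hi (le_of_lt (Fin.lt_def.mp hij))
    rw [← tailPos_tailIdx hf i hi, ← tailPos_tailIdx hf j hjge,
      dOf_tailPos, dOf_tailPos]
    have : tailIdx hf i hi < tailIdx hf j hjge := by
      rw [Fin.lt_def] at hij ⊢
      simp only [tailIdx, Fin.val_mk]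
      omega
    exact tSeq_strictMono' hf σ this

end Construction

end Aux

/-- `D_{f,n}` is a complete set of left coset representatives for
`H ≅ ((ℤ₂ × ⋯ × ℤ₂) ⋊ S_f) × S_s` in `S_n`:  the multiplication map
`D_{f,n} × H → S_n`, `(d, h) ↦ d ∘ h`, is a bijection. -/
theorem Dfn_coset_representatives (n f : ℕ) (hn : 1 ≤ n) (hf : 2 * f ≤ n) :
    Function.Bijective
      (fun p : Dfn n f × {h : Equiv.Perm (Fin n) // InH n f h} =>
        (p.1 : Equiv.Perm (Fin n)) * (p.2 : Equiv.Perm (Fin n))) := by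
  constructor
  · rintro ⟨⟨d1, hd1⟩, ⟨h1, hh1⟩⟩ ⟨⟨d2, hd2⟩, ⟨h2, hh2⟩⟩ hpq
    change d1 * h1 = d2 * h2 at hpq
    have hd2eq : d2 = d1 * (h1 * h2⁻¹) := by
      rw [← mul_assoc, hpq]
      group
    have hone := h_eq_one hf hd1 hd2 (InH.mul hh1 (InH.inv hh2))
      (fun i => by rw [hd2eq]; rfl)
    have hh12 : h1 = h2 := by
      have := mul_inv_eq_one.mp hone
      exact this
    have hd12 : d1 = d2 := by rw [hd2eq, hone, mul_one]
    simp only [Prod.mk.injEq, Subtype.mk.injEq]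
    exact ⟨hd12, hh12⟩
  · intro σ
    exact ⟨⟨⟨dOf hf σ, dOf_mem hf σ⟩, ⟨hOf hf σ, hOf_InH hf σ⟩⟩, dOf_mul_hOf hf σ⟩

end
end

section
/- Fix n ≥ 1, an integer f with 0 ≤ f ≤ n/2, and set s = n − 2f. Every π ∈ D_{f,n} factors uniquely as π = π₁ ∘ π₂, where π₁ ∈ S_n is a (2f, s)-shuffle (i.e. π₁ is increasing on {1,…,2f} and increasing on {2f+1,…,n}), and π₂ ∈ S_n fixes {2f+1,…,n} pointwise and restricts on {1,…,2f} to an element of D_{f,2f}. Moreover ℓ(π) = ℓ(π₁) + ℓ(π₂), where ℓ denotes the number of inversions of a permutation (its Coxeter length in S_n). -/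
noncomputable section

open scoped BigOperators

/-- `π₁` is a `(2f, n-2f)`-shuffle:  it is increasing on `{1,…,2f}` and on
`{2f+1,…,n}` (0-based: on `{0,…,2f-1}` and on `{2f,…,n-1}`). -/
def IsShuffle (n f : ℕ) (π₁ : Equiv.Perm (Fin n)) : Prop :=
  ∀ i j : Fin n, i < j → ((j : ℕ) < 2 * f ∨ 2 * f ≤ (i : ℕ)) → π₁ i < π₁ j

namespace DfnAux

/-- The rank of `π i` among the values `π j` for `j` in the lower block. -/
def rk (n f : ℕ) (π : Equiv.Perm (Fin n)) (i : Fin n) : ℕ :=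
  (Finset.univ.filter (fun j : Fin n => (j : ℕ) < 2 * f ∧ π j < π i)).card

lemma card_low_le (n f : ℕ) :
    (Finset.univ.filter (fun j : Fin n => (j : ℕ) < 2 * f)).card ≤ 2 * f := by
  classical
  have h := Finset.card_le_card_of_injOn
    (s := Finset.univ.filter (fun j : Fin n => (j : ℕ) < 2 * f))
    (t := Finset.range (2 * f)) (fun j : Fin n => (j : ℕ))
    (fun a ha => by simpa using (Finset.mem_filter.mp ha).2)
    (fun a _ b _ h => Fin.val_injective h)
  simpa using h

lemma rk_lt {n f : ℕ} (π : Equiv.Perm (Fin n)) (i : Fin n) (hi : (i : ℕ) < 2 * f) :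
    rk n f π i < 2 * f := by
  classical
  have hsub : (Finset.univ.filter (fun j : Fin n => (j : ℕ) < 2 * f ∧ π j < π i)) ⊆
      (Finset.univ.filter (fun j : Fin n => (j : ℕ) < 2 * f)).erase i := by
    intro j hj
    rw [Finset.mem_filter] at hj
    rw [Finset.mem_erase, Finset.mem_filter]
    refine ⟨fun h => ?_, Finset.mem_univ _, hj.2.1⟩
    subst h; exact lt_irrefl _ hj.2.2
  have hmem : i ∈ Finset.univ.filter (fun j : Fin n => (j : ℕ) < 2 * f) := by
    simp [hi]
  have h1 := Finset.card_le_card hsub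
  rw [Finset.card_erase_of_mem hmem] at h1
  have h2 := card_low_le n f
  have h3 := Finset.card_pos.mpr ⟨i, hmem⟩
  unfold rk
  omega

lemma rk_lt_rk {n f : ℕ} (π : Equiv.Perm (Fin n)) {i j : Fin n} (hi : (i : ℕ) < 2 * f)
    (hij : π i < π j) : rk n f π i < rk n f π j := by
  classical
  apply Finset.card_lt_card
  rw [Finset.ssubset_iff_of_subset]
  · exact ⟨i, by simp [hi, hij], by simp⟩
  · intro k hk
    rw [Finset.mem_filter] at hk ⊢
    exact ⟨hk.1, hk.2.1, hk.2.2.trans hij⟩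

/-- The function underlying `π₂`. -/
def rFun {n f : ℕ} (hf : 2 * f ≤ n) (π : Equiv.Perm (Fin n)) (i : Fin n) : Fin n :=
  if h : (i : ℕ) < 2 * f then ⟨rk n f π i, lt_of_lt_of_le (rk_lt π i h) hf⟩ else i

lemma rFun_lt_iff {n f : ℕ} (hf : 2 * f ≤ n) (π : Equiv.Perm (Fin n)) {i j : Fin n}
    (hi : (i : ℕ) < 2 * f) (hj : (j : ℕ) < 2 * f) :
    rFun hf π i < rFun hf π j ↔ π i < π j := by
  rw [rFun, rFun, dif_pos hi, dif_pos hj, Fin.mk_lt_mk]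
  constructor
  · intro h
    rcases lt_trichotomy (π i) (π j) with h1 | h1 | h1
    · exact h1
    · exact absurd (π.injective h1 ▸ h) (lt_irrefl _)
    · exact absurd h (not_lt.mpr (rk_lt_rk π hj h1).le)
  · exact rk_lt_rk π hi

lemma rFun_low {n f : ℕ} (hf : 2 * f ≤ n) (π : Equiv.Perm (Fin n)) {i : Fin n}
    (hi : (i : ℕ) < 2 * f) : (rFun hf π i : ℕ) < 2 * f := by
  rw [rFun, dif_pos hi]; exact rk_lt π i hi

lemma rFun_fix {n f : ℕ} (hf : 2 * f ≤ n) (π : Equiv.Perm (Fin n)) {i : Fin n}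
    (hi : 2 * f ≤ (i : ℕ)) : rFun hf π i = i := by
  rw [rFun, dif_neg (not_lt.mpr hi)]

lemma rFun_inj {n f : ℕ} (hf : 2 * f ≤ n) (π : Equiv.Perm (Fin n)) :
    Function.Injective (rFun hf π) := by
  intro i j h
  by_cases hi : (i : ℕ) < 2 * f <;> by_cases hj : (j : ℕ) < 2 * f
  · rcases lt_trichotomy (π i) (π j) with h1 | h1 | h1
    · exact absurd h (ne_of_lt ((rFun_lt_iff hf π hi hj).mpr h1))
    · exact π.injective h1
    · exact absurd h (ne_of_gt ((rFun_lt_iff hf π hj hi).mpr h1))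
  · exfalso
    have h1 := rFun_low hf π hi
    rw [h, rFun_fix hf π (not_lt.mp hj)] at h1
    omega
  · exfalso
    have h1 := rFun_low hf π hj
    rw [← h, rFun_fix hf π (not_lt.mp hi)] at h1
    omega
  · rwa [rFun_fix hf π (not_lt.mp hi), rFun_fix hf π (not_lt.mp hj)] at h

/-- `π₂`: the ordered-block part of the decomposition. -/
def perm2 {n f : ℕ} (hf : 2 * f ≤ n) (π : Equiv.Perm (Fin n)) : Equiv.Perm (Fin n) :=
  Equiv.ofBijective (rFun hf π) (Finite.injective_iff_bijective.mp (rFun_inj hf π))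

lemma perm2_apply {n f : ℕ} (hf : 2 * f ≤ n) (π : Equiv.Perm (Fin n)) (i : Fin n) :
    perm2 hf π i = rFun hf π i := rfl

end DfnAux

/-- Every `π ∈ D_{f,n}` factors uniquely as `π = π₁ ∘ π₂` with `π₁` a
`(2f, s)`-shuffle and `π₂` fixing `{2f+1,…,n}` pointwise and restricting on `{1,…,2f}` to
an element of `D_{f,2f}` (equivalently, `π₂ ∈ D_{f,n}` and fixes `{2f+1,…,n}`);
moreover `ℓ(π) = ℓ(π₁) + ℓ(π₂)`. -/
theorem Dfn_shuffle_factorization (n f : ℕ) (hn : 1 ≤ n) (hf : 2 * f ≤ n)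
    (π : Equiv.Perm (Fin n)) (hπ : π ∈ Dfn n f) :
    ∃ π₁ π₂ : Equiv.Perm (Fin n),
      (IsShuffle n f π₁ ∧ (∀ i : Fin n, 2 * f ≤ (i : ℕ) → π₂ i = i) ∧ π₂ ∈ Dfn n f ∧
        π = π₁ * π₂ ∧ invCount n π = invCount n π₁ + invCount n π₂) ∧
      (∀ π₁' π₂' : Equiv.Perm (Fin n),
        IsShuffle n f π₁' → (∀ i : Fin n, 2 * f ≤ (i : ℕ) → π₂' i = i) → π₂' ∈ Dfn n f →
          π = π₁' * π₂' → π₁' = π₁ ∧ π₂' = π₂) := by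
  classical
  obtain ⟨hD1, hD2, hD3⟩ := hπ
  refine ⟨π * (DfnAux.perm2 hf π)⁻¹, DfnAux.perm2 hf π, ?_, ?_⟩ <;>
    [skip; skip]
  case _ =>
    set π₂ := DfnAux.perm2 hf π with hπ₂def
    set π₁ := π * π₂⁻¹ with hπ₁def
    have h2fix : ∀ i : Fin n, 2 * f ≤ (i : ℕ) → π₂ i = i := fun i hi =>
      DfnAux.rFun_fix hf π hi
    have h2low : ∀ i : Fin n, (i : ℕ) < 2 * f → (π₂ i : ℕ) < 2 * f := fun i hi =>
      DfnAux.rFun_low hf π hi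
    have hiff : ∀ i j : Fin n, (i : ℕ) < 2 * f → (j : ℕ) < 2 * f →
        (π₂ i < π₂ j ↔ π i < π j) := fun i j hi hj => DfnAux.rFun_lt_iff hf π hi hj
    have hinvfix : ∀ i : Fin n, 2 * f ≤ (i : ℕ) → π₂⁻¹ i = i := by
      intro i hi
      have h := h2fix i hi
      calc π₂⁻¹ i = π₂⁻¹ (π₂ i) := by rw [h]
        _ = i := Equiv.Perm.inv_eq_iff_eq.mpr rfl
    have hinvlow : ∀ i : Fin n, (i : ℕ) < 2 * f → (π₂⁻¹ i : ℕ) < 2 * f := by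
      intro i hi
      by_contra h
      have h1 := h2fix (π₂⁻¹ i) (not_lt.mp h)
      rw [Equiv.Perm.eq_inv_iff_eq.mp rfl] at h1
      rw [← h1] at h
      exact h hi
    have hπ1ap : ∀ i : Fin n, π₁ i = π (π₂⁻¹ i) := fun i => rfl
    have hshuf : IsShuffle n f π₁ := by
      intro i j hij hcase
      rcases hcase with h | h
      · have hi : (i : ℕ) < 2 * f := lt_trans (Fin.lt_def.mp hij) h
        have ha : (π₂⁻¹ i : ℕ) < 2 * f := hinvlow i hi
        have hb : (π₂⁻¹ j : ℕ) < 2 * f := hinvlow j h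
        have h1 : π₂ (π₂⁻¹ i) < π₂ (π₂⁻¹ j) := by
          rw [Equiv.Perm.eq_inv_iff_eq.mp rfl, Equiv.Perm.eq_inv_iff_eq.mp rfl]; exact hij
        have h2 := (hiff _ _ ha hb).mp h1
        rw [hπ1ap, hπ1ap]; exact h2
      · have hj : 2 * f ≤ (j : ℕ) := le_trans h (le_of_lt (Fin.lt_def.mp hij))
        rw [hπ1ap, hπ1ap, hinvfix i h, hinvfix j hj]
        exact hD3 i j h hij
    have hmem2 : π₂ ∈ Dfn n f := by
      refine ⟨?_, ?_, ?_⟩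
      · intro i j hi hj hij hj2
        have hi2 : (i : ℕ) < 2 * f := lt_trans (Fin.lt_def.mp hij) hj2
        exact (hiff i j hi2 hj2).mpr (hD1 i j hi hj hij hj2)
      · intro i j hi hj hj2
        have hi2 : (i : ℕ) < 2 * f := by omega
        exact (hiff i j hi2 hj2).mpr (hD2 i j hi hj hj2)
      · intro i j hi hij
        have hj : 2 * f ≤ (j : ℕ) := le_trans hi (le_of_lt (Fin.lt_def.mp hij))
        rw [h2fix i hi, h2fix j hj]; exact hij
    have hfact : π = π₁ * π₂ := (inv_mul_cancel_right π π₂).symm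
    refine ⟨hshuf, h2fix, hmem2, hfact, ?_⟩
    -- inversion counting
    have hA : invCount n π₂ =
        ((Finset.univ.filter (fun p : Fin n × Fin n => p.1 < p.2 ∧ π p.2 < π p.1)).filter
          (fun p => (p.2 : ℕ) < 2 * f)).card := by
      rw [invCount]
      congr 1
      ext p
      simp only [Finset.mem_filter, Finset.mem_univ, true_and]
      constructor
      · rintro ⟨h12, hinv⟩
        by_cases hp2 : (p.2 : ℕ) < 2 * f
        · have hp1 : (p.1 : ℕ) < 2 * f := lt_trans (Fin.lt_def.mp h12) hp2
          exact ⟨⟨h12, (hiff p.2 p.1 hp2 hp1).mp hinv⟩, hp2⟩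
        · exfalso
          have h1 := h2fix p.2 (not_lt.mp hp2)
          by_cases hp1 : (p.1 : ℕ) < 2 * f
          · have := h2low p.1 hp1
            rw [h1] at hinv
            have := Fin.lt_def.mp hinv
            omega
          · rw [h1, h2fix p.1 (not_lt.mp hp1)] at hinv
            exact absurd hinv (not_lt.mpr (le_of_lt h12))
      · rintro ⟨⟨h12, hinv⟩, hp2⟩
        have hp1 : (p.1 : ℕ) < 2 * f := lt_trans (Fin.lt_def.mp h12) hp2
        exact ⟨h12, (hiff p.2 p.1 hp2 hp1).mpr hinv⟩
    have hB : invCount n π₁ =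
        ((Finset.univ.filter (fun p : Fin n × Fin n => p.1 < p.2 ∧ π p.2 < π p.1)).filter
          (fun p => ¬ (p.2 : ℕ) < 2 * f)).card := by
      rw [invCount]
      refine Finset.card_bij' (fun q _ => ((π₂⁻¹ q.1, q.2) : Fin n × Fin n))
        (fun p _ => ((π₂ p.1, p.2) : Fin n × Fin n)) ?_ ?_ ?_ ?_
      · intro q hq
        simp only [Finset.mem_filter, Finset.mem_univ, true_and] at hq ⊢
        obtain ⟨h12, hinv⟩ := hq
        have hq1 : (q.1 : ℕ) < 2 * f := by
          by_contra h
          have h1 : 2 * f ≤ (q.2 : ℕ) := le_trans (not_lt.mp h) (le_of_lt (Fin.lt_def.mp h12))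
          rw [hπ1ap, hπ1ap, hinvfix q.1 (not_lt.mp h), hinvfix q.2 h1] at hinv
          exact absurd hinv (not_lt.mpr (le_of_lt (hD3 q.1 q.2 (not_lt.mp h) h12)))
        have hq2 : 2 * f ≤ (q.2 : ℕ) := by
          by_contra h
          have h2 : (q.2 : ℕ) < 2 * f := not_le.mp h
          have ha := hinvlow q.1 hq1
          have hb := hinvlow q.2 h2
          have h3 : π₂ (π₂⁻¹ q.1) < π₂ (π₂⁻¹ q.2) := by
            rw [Equiv.Perm.eq_inv_iff_eq.mp rfl, Equiv.Perm.eq_inv_iff_eq.mp rfl]; exact h12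
          have h4 := (hiff _ _ ha hb).mp h3
          rw [hπ1ap, hπ1ap] at hinv
          exact absurd h4 (not_lt.mpr (le_of_lt hinv))
        have hlow := hinvlow q.1 hq1
        refine ⟨⟨Fin.lt_def.mpr (by omega), ?_⟩, by omega⟩
        rw [hπ1ap, hπ1ap, hinvfix q.2 hq2] at hinv
        exact hinv
      · intro p hp
        simp only [Finset.mem_filter, Finset.mem_univ, true_and] at hp ⊢
        obtain ⟨⟨h12, hinv⟩, hp2⟩ := hp
        have hp1 : (p.1 : ℕ) < 2 * f := by
          by_contra h
          exact absurd hinv (not_lt.mpr (le_of_lt (hD3 p.1 p.2 (not_lt.mp h) h12)))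
        have hlow := h2low p.1 hp1
        refine ⟨Fin.lt_def.mpr (by omega), ?_⟩
        rw [hπ1ap, hπ1ap, hinvfix p.2 (not_lt.mp hp2), Equiv.Perm.inv_eq_iff_eq.mpr rfl]
        exact hinv
      · intro q _
        exact Prod.ext (Equiv.apply_symm_apply π₂ q.1) rfl
      · intro p _
        exact Prod.ext (Equiv.symm_apply_apply π₂ p.1) rfl
    rw [invCount, ← Finset.card_filter_add_card_filter_not
      (p := fun p : Fin n × Fin n => (p.2 : ℕ) < 2 * f), hA, hB]
    omega
  case _ =>
    intro π₁' π₂' hshuf' hfix' hmem' heq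
    set π₂ := DfnAux.perm2 hf π with hπ₂def
    have h2'low : ∀ i : Fin n, (i : ℕ) < 2 * f → (π₂' i : ℕ) < 2 * f := by
      intro i hi
      by_contra h
      have h1 := hfix' (π₂' i) (not_lt.mp h)
      have h2 := π₂'.injective h1
      rw [h2] at h
      omega
    have h2'iff : ∀ i j : Fin n, (i : ℕ) < 2 * f → (j : ℕ) < 2 * f →
        (π₂' i < π₂' j ↔ π i < π j) := by
      intro i j hi hj
      rw [heq]
      simp only [Equiv.Perm.mul_apply]
      constructor
      · intro h; exact hshuf' _ _ h (Or.inl (h2'low j hj))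
      · intro h
        rcases lt_trichotomy (π₂' i) (π₂' j) with h1 | h1 | h1
        · exact h1
        · rw [h1] at h; exact absurd h (lt_irrefl _)
        · exact absurd (hshuf' _ _ h1 (Or.inl (h2'low i hi))) (not_lt.mpr (le_of_lt h))
    have hval : ∀ i : Fin n, (i : ℕ) < 2 * f → (π₂' i : ℕ) = DfnAux.rk n f π i := by
      intro i hi
      have hcongr : (Finset.univ.filter (fun j : Fin n => (j : ℕ) < 2 * f ∧ π j < π i)) =
          (Finset.univ.filter (fun j : Fin n => (j : ℕ) < 2 * f ∧ π₂' j < π₂' i)) := by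
        apply Finset.filter_congr
        intro j _
        constructor
        · rintro ⟨h1, h2⟩; exact ⟨h1, (h2'iff j i h1 hi).mpr h2⟩
        · rintro ⟨h1, h2⟩; exact ⟨h1, (h2'iff j i h1 hi).mp h2⟩
      have hcard : (Finset.univ.filter
          (fun j : Fin n => (j : ℕ) < 2 * f ∧ π₂' j < π₂' i)).card = (π₂' i : ℕ) := by
        rw [← Finset.card_range ((π₂' i : ℕ))]
        refine Finset.card_bij' (fun j _ => ((π₂' j : ℕ)))
          (fun m hm => π₂'⁻¹ ⟨m, lt_trans (Finset.mem_range.mp hm) (π₂' i).isLt⟩)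
          ?_ ?_ ?_ ?_
        · intro a ha
          simp only [Finset.mem_filter, Finset.mem_univ, true_and] at ha
          exact Finset.mem_range.mpr (Fin.lt_def.mp ha.2)
        · intro m hm
          have hmlt := Finset.mem_range.mp hm
          simp only [Finset.mem_filter, Finset.mem_univ, true_and]
          set b := π₂'⁻¹ ⟨m, lt_trans hmlt (π₂' i).isLt⟩ with hb
          have hπb : π₂' b = ⟨m, lt_trans hmlt (π₂' i).isLt⟩ := Equiv.apply_symm_apply π₂' _
          have hmf : m < 2 * f := lt_trans hmlt (h2'low i hi)
          have hblow : (b : ℕ) < 2 * f := by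
            by_contra h
            have h1 := hfix' b (not_lt.mp h)
            rw [h1] at hπb
            rw [hπb] at h
            simp at h
            omega
          refine ⟨hblow, ?_⟩
          rw [hπb]
          exact Fin.lt_def.mpr hmlt
        · intro a _
          simp only [Fin.eta, Equiv.Perm.inv_eq_iff_eq]
        · intro m _
          rw [Equiv.Perm.eq_inv_iff_eq.mp rfl]
      rw [DfnAux.rk, hcongr, hcard]
    have h2'eq : π₂' = π₂ := by
      apply Equiv.ext
      intro i
      by_cases hi : (i : ℕ) < 2 * f
      · apply Fin.ext
        rw [hval i hi]
        have : π₂ i = ⟨DfnAux.rk n f π i, lt_of_lt_of_le (DfnAux.rk_lt π i hi) hf⟩ := by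
          rw [hπ₂def, DfnAux.perm2_apply, DfnAux.rFun, dif_pos hi]
        rw [this]
      · rw [hfix' i (not_lt.mp hi)]
        exact (DfnAux.rFun_fix hf π (not_lt.mp hi)).symm
    have h1'eq : π₁' = π * π₂⁻¹ := by
      have h : π₁' * π₂' = (π * π₂⁻¹) * π₂ := by
        rw [← heq, inv_mul_cancel_right]
      rw [h2'eq] at h
      exact mul_right_cancel h
    exact ⟨h1'eq, h2'eq⟩

end
end

section
/- Let R be an integral domain, A a unital R-algebra equipped with an R-linear involutive algebra anti-automorphism *, and J a two-sided ideal of A with J* = J, so that * induces an involution on A/J. Suppose J is a cellular ideal in A: there is a poset Λ_J, sets T(λ) for λ ∈ Λ_J, and elements {c^λ_{s,t} : λ ∈ Λ_J, s,t ∈ T(λ)} ⊆ J forming an R-basis of J, such that (c^λ_{s,t})* ≡ c^λ_{t,s} modulo J̌^λ (the span of c^μ_{s,t} with μ > λ), and such that for every a ∈ A (not merely a ∈ J), every λ ∈ Λ_J and s ∈ T(λ), there exist coefficients r^s_v(a) ∈ R (independent of t) with a·c^λ_{s,t} ≡ Σ_v r^s_v(a) c^λ_{v,t} mod J̌^λ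 for all t ∈ T(λ). Suppose moreover that A/J, with the induced involution, is a cellular algebra. Then A is a cellular algebra. -/
noncomputable section

/-- A cell datum for a unital `R`-algebra `A` (Graham–Lehrer, in the slightly weakened
form used in the paper):  an `R`-linear involutive algebra anti-automorphism `star`; a
partially ordered set `Λ` (given by its strict order `lt`); finite index sets `T l`; and
a family `c` which is an `R`-basis of `A` satisfying the multiplication property (2) and
the `*`-symmetry property (3) modulo the span `Ǎ^λ` of higher cells. -/
structure CellDatum (R A : Type) [CommRing R] [Ring A] [Algebra R A] : Type 1 where
  star : A →ₗ[R] A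
  star_mul : ∀ a b : A, star (a * b) = star b * star a
  star_one : star 1 = 1
  star_invol : ∀ a : A, star (star a) = a
  Λ : Type
  lt : Λ → Λ → Prop
  lt_irrefl : ∀ l, ¬ lt l l
  lt_trans : ∀ {a b c : Λ}, lt a b → lt b c → lt a c
  T : Λ → Type
  fin : ∀ l, Fintype (T l)
  c : ∀ l : Λ, T l → T l → A
  indep : LinearIndependent R (fun p : Σ l : Λ, T l × T l => c p.1 p.2.1 p.2.2)
  span : Submodule.span R (Set.range (fun p : Σ l : Λ, T l × T l => c p.1 p.2.1 p.2.2)) = ⊤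
  mul_mod : ∀ (l : Λ) (s : T l) (a : A), ∃ rr : T l → R, ∀ t : T l,
      a * c l s t - (@Finset.univ (T l) (fin l)).sum (fun v => rr v • c l v t) ∈
        Submodule.span R {x : A | ∃ m : Λ, ∃ s' t' : T m, lt l m ∧ x = c m s' t'}
  star_mod : ∀ (l : Λ) (s t : T l),
      star (c l s t) - c l t s ∈
        Submodule.span R {x : A | ∃ m : Λ, ∃ s' t' : T m, lt l m ∧ x = c m s' t'}

/-- An `R`-algebra is cellular if it admits a cell datum. -/
def IsCellular (R A : Type) [CommRing R] [Ring A] [Algebra R A] : Prop :=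
  Nonempty (CellDatum R A)

/-- The order on the disjoint union of index posets: quotient cells below ideal cells. -/
def ltSum {ΛB ΛJ : Type} (ltB : ΛB → ΛB → Prop) (ltJ : ΛJ → ΛJ → Prop) :
    ΛB ⊕ ΛJ → ΛB ⊕ ΛJ → Prop
  | Sum.inl l, Sum.inl m => ltB l m
  | Sum.inl _, Sum.inr _ => True
  | Sum.inr _, Sum.inl _ => False
  | Sum.inr l, Sum.inr m => ltJ l m

/-- The combined cell family on the disjoint union of index sets. -/
def cSum {ΛB ΛJ : Type} {TB : ΛB → Type} {TJ : ΛJ → Type} {A : Type}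
    (cB : ∀ l, TB l → TB l → A) (cJ : ∀ l, TJ l → TJ l → A) :
    ∀ l : ΛB ⊕ ΛJ, Sum.elim TB TJ l → Sum.elim TB TJ l → A
  | Sum.inl l => cB l
  | Sum.inr l => cJ l

/-- Reindexing equivalence between a sum of sigma types and a sigma over a sum. -/
def eSum {ΛB ΛJ : Type} {TB : ΛB → Type} {TJ : ΛJ → Type} :
    ((Σ l : ΛB, TB l × TB l) ⊕ (Σ l : ΛJ, TJ l × TJ l)) ≃
      (Σ l : ΛB ⊕ ΛJ, Sum.elim TB TJ l × Sum.elim TB TJ l) where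
  toFun := Sum.elim (fun p => ⟨Sum.inl p.1, p.2⟩) (fun p => ⟨Sum.inr p.1, p.2⟩)
  invFun := fun q => match q with
    | ⟨Sum.inl l, st⟩ => Sum.inl ⟨l, st⟩
    | ⟨Sum.inr l, st⟩ => Sum.inr ⟨l, st⟩
  left_inv := by rintro (⟨l, s, t⟩ | ⟨l, s, t⟩) <;> rfl
  right_inv := by rintro ⟨l | l, s, t⟩ <;> rfl

/-- Let `R` be an integral domain, `A` a unital `R`-algebra with an
`R`-linear involutive anti-automorphism `st`, and `J` a `st`-invariant two-sided ideal
of `A`.  Suppose `J` is a cellular ideal in `A` (with data `Λ`, `lt`, `T`, `c` as below,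
with the multiplication property holding for all `a ∈ A`), and suppose that `A/J` —
realized as the codomain of any surjective algebra map `π` with kernel `J`, equipped
with the involution induced by `st` — is a cellular algebra.  Then `A` is a cellular
algebra (with respect to the involution `st`). -/
theorem cellular_of_cellular_ideal (R A B : Type) [CommRing R] [IsDomain R]
    [Ring A] [Algebra R A] [Ring B] [Algebra R B]
    -- the involution on `A`
    (st : A →ₗ[R] A) (st_mul : ∀ a b : A, st (a * b) = st b * st a) (st_one : st 1 = 1)
    (st_invol : ∀ a : A, st (st a) = a)
    -- the two-sided ideal `J`, invariant under `st`
    (J : Submodule R A)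
    (hJl : ∀ (a : A), ∀ x ∈ J, a * x ∈ J) (hJr : ∀ (a : A), ∀ x ∈ J, x * a ∈ J)
    (hJst : ∀ x ∈ J, st x ∈ J)
    -- the quotient `A/J`:  a surjective algebra map `π : A → B` with kernel `J`
    (π : A →ₐ[R] B) (hπsurj : Function.Surjective π) (hπker : LinearMap.ker π.toLinearMap = J)
    -- the involution induced by `st` on `B`
    (stB : B →ₗ[R] B) (hstB : ∀ a : A, stB (π a) = π (st a))
    -- `B = A/J` is cellular with respect to the induced involution
    (cdB : CellDatum R B) (hcdB : cdB.star = stB)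
    -- the cell-ideal data on `J`
    (Λ : Type) (lt : Λ → Λ → Prop) (lt_irrefl : ∀ l, ¬ lt l l)
    (lt_trans : ∀ {a b c : Λ}, lt a b → lt b c → lt a c)
    (T : Λ → Type) (fin : ∀ l, Fintype (T l)) (c : ∀ l : Λ, T l → T l → A)
    (hcJ : ∀ (l : Λ) (s t : T l), c l s t ∈ J)
    (indep : LinearIndependent R (fun p : Σ l : Λ, T l × T l => c p.1 p.2.1 p.2.2))
    (hspan : Submodule.span R
      (Set.range (fun p : Σ l : Λ, T l × T l => c p.1 p.2.1 p.2.2)) = J)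
    (mul_mod : ∀ (l : Λ) (s : T l) (a : A), ∃ rr : T l → R, ∀ t : T l,
      a * c l s t - (@Finset.univ (T l) (fin l)).sum (fun v => rr v • c l v t) ∈
        Submodule.span R {x : A | ∃ m : Λ, ∃ s' t' : T m, lt l m ∧ x = c m s' t'})
    (star_mod : ∀ (l : Λ) (s t : T l),
      st (c l s t) - c l t s ∈
        Submodule.span R {x : A | ∃ m : Λ, ∃ s' t' : T m, lt l m ∧ x = c m s' t'}) :
    ∃ cd : CellDatum R A, cd.star = st := by
  classical
  set σ : B → A := Function.surjInv hπsurj with hσ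
  have hπσ : ∀ b, π (σ b) = b := Function.surjInv_eq hπsurj
  set vB : (Σ l : cdB.Λ, cdB.T l × cdB.T l) → A :=
    fun p => σ (cdB.c p.1 p.2.1 p.2.2) with hvBdef
  set vJ : (Σ l : Λ, T l × T l) → A := fun p => c p.1 p.2.1 p.2.2 with hvJdef
  have hπvB : ⇑π.toLinearMap ∘ vB = fun p => cdB.c p.1 p.2.1 p.2.2 :=
    funext fun p => hπσ _
  have hvB : LinearIndependent R vB :=
    LinearIndependent.of_comp π.toLinearMap (hπvB ▸ cdB.indep)
  have hJspan : Submodule.span R (Set.range vJ) = J := hspan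
  have hdisj : Disjoint (Submodule.span R (Set.range vB))
      (Submodule.span R (Set.range vJ)) := by
    rw [Submodule.disjoint_def]
    intro x hx hxJ
    have hxker : π x = 0 := by
      have : x ∈ LinearMap.ker π.toLinearMap := by rw [hπker, ← hJspan]; exact hxJ
      exact this
    obtain ⟨cc, hcc⟩ := (Finsupp.mem_span_range_iff_exists_finsupp).mp hx
    have hππ : (Finsupp.linearCombination R (fun p : Σ l : cdB.Λ, cdB.T l × cdB.T l =>
        cdB.c p.1 p.2.1 p.2.2)) cc = 0 := by
      rw [Finsupp.linearCombination_apply]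
      have h0 : π (cc.sum fun i a => a • vB i) = 0 := by rw [hcc]; exact hxker
      rw [map_finsuppSum] at h0
      simpa [hπσ, hvBdef] using h0
    have hcc0 : cc = 0 := linearIndependent_iff.mp cdB.indep cc hππ
    rw [← hcc, hcc0]
    simp
  have hindS : LinearIndependent R (Sum.elim vB vJ) := hvB.sum_type indep hdisj
  have key : ∀ (l : cdB.Λ) (y : A),
      π y ∈ Submodule.span R
        {x : B | ∃ m, ∃ s' t', cdB.lt l m ∧ x = cdB.c m s' t'} →
      y ∈ Submodule.span R {x : A | ∃ m : cdB.Λ ⊕ Λ,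
        ∃ s' t' : Sum.elim cdB.T T m, ltSum cdB.lt lt (Sum.inl l) m ∧
          x = cSum (fun l s t => σ (cdB.c l s t)) c m s' t'} := by
    intro l y hy
    set SB := {x : B | ∃ m, ∃ s' t', cdB.lt l m ∧ x = cdB.c m s' t'} with hSB
    set SA := {x : A | ∃ m : cdB.Λ ⊕ Λ,
        ∃ s' t' : Sum.elim cdB.T T m, ltSum cdB.lt lt (Sum.inl l) m ∧
          x = cSum (fun l s t => σ (cdB.c l s t)) c m s' t'} with hSA
    have h1 : Submodule.span R SB =
        Submodule.map π.toLinearMap (Submodule.span R (σ '' SB)) := by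
      rw [Submodule.map_span, Set.image_image]
      congr 1
      have he : (fun x => π.toLinearMap (σ x)) = fun x : B => x := funext fun x => hπσ x
      rw [he, Set.image_id']
    rw [h1] at hy
    obtain ⟨z, hz, hzy⟩ := hy
    have hsub : σ '' SB ⊆ SA := by
      rintro _ ⟨x, ⟨m, s', t', hlt, rfl⟩, rfl⟩
      exact ⟨Sum.inl m, s', t', hlt, rfl⟩
    have hzSA : z ∈ Submodule.span R SA := Submodule.span_mono hsub hz
    have hJSA : J ≤ Submodule.span R SA := by
      rw [← hspan]
      refine Submodule.span_le.mpr ?_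
      rintro _ ⟨p, rfl⟩
      exact Submodule.subset_span ⟨Sum.inr p.1, p.2.1, p.2.2, trivial, rfl⟩
    have hyzJ : y - z ∈ J := by
      rw [← hπker]
      have h0 : π (y - z) = 0 := by
        have h := map_sub π.toLinearMap y z
        simp only [AlgHom.toLinearMap_apply] at h
        simp only [AlgHom.toLinearMap_apply] at hzy
        rw [h, hzy, sub_self]
      exact h0
    have hadd := add_mem hzSA (hJSA hyzJ)
    simpa using hadd
  refine ⟨{
      star := st
      star_mul := st_mul
      star_one := st_one
      star_invol := st_invol
      Λ := cdB.Λ ⊕ Λ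
      lt := ltSum cdB.lt lt
      lt_irrefl := by
        rintro (l | l) h
        · exact cdB.lt_irrefl l h
        · exact lt_irrefl l h
      lt_trans := by
        intro a b d h1 h2
        rcases a with l | l <;> rcases b with m | m <;> rcases d with n | n <;>
          first
            | exact trivial
            | exact h1.elim
            | exact h2.elim
            | exact cdB.lt_trans h1 h2
            | exact lt_trans h1 h2
      T := Sum.elim cdB.T T
      fin := fun l => match l with
        | Sum.inl l => cdB.fin l
        | Sum.inr l => fin l
      c := cSum (fun l s t => σ (cdB.c l s t)) c
      indep := ?_
      span := ?_
      mul_mod := ?_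
      star_mod := ?_ }, rfl⟩
  · have hcomp : ((fun p : Σ l : cdB.Λ ⊕ Λ, Sum.elim cdB.T T l × Sum.elim cdB.T T l =>
        cSum (fun l s t => σ (cdB.c l s t)) c p.1 p.2.1 p.2.2) ∘
          ⇑(eSum (TB := cdB.T) (TJ := T))) = Sum.elim vB vJ := by
      funext p
      rcases p with ⟨l, s, t⟩ | ⟨l, s, t⟩ <;> rfl
    have h := hindS
    rw [← hcomp] at h
    exact (linearIndependent_equiv (eSum (TB := cdB.T) (TJ := T))).mp h
  · have hrangeB : Set.range vB ⊆ Set.range (fun p : Σ l : cdB.Λ ⊕ Λ,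
        Sum.elim cdB.T T l × Sum.elim cdB.T T l =>
        cSum (fun l s t => σ (cdB.c l s t)) c p.1 p.2.1 p.2.2) := by
      rintro _ ⟨p, rfl⟩
      exact ⟨⟨Sum.inl p.1, p.2⟩, rfl⟩
    have hrangeJ : Set.range vJ ⊆ Set.range (fun p : Σ l : cdB.Λ ⊕ Λ,
        Sum.elim cdB.T T l × Sum.elim cdB.T T l =>
        cSum (fun l s t => σ (cdB.c l s t)) c p.1 p.2.1 p.2.2) := by
      rintro _ ⟨p, rfl⟩
      exact ⟨⟨Sum.inr p.1, p.2⟩, rfl⟩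
    rw [eq_top_iff]
    rintro a -
    have hmap : Submodule.map π.toLinearMap (Submodule.span R (Set.range vB)) = ⊤ := by
      rw [Submodule.map_span, ← Set.range_comp, hπvB, cdB.span]
    have hmem : π a ∈ Submodule.map π.toLinearMap (Submodule.span R (Set.range vB)) := by
      rw [hmap]; trivial
    obtain ⟨z, hz, hzπ⟩ := hmem
    have hyz : a - z ∈ J := by
      rw [← hπker]
      have h0 : π (a - z) = 0 := by
        have h := map_sub π.toLinearMap a z
        simp only [AlgHom.toLinearMap_apply] at h
        rw [h]
        simp only [AlgHom.toLinearMap_apply] at hzπ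
        rw [hzπ, sub_self]
      exact h0
    have h1 := Submodule.span_mono hrangeB hz
    have h2 : a - z ∈ Submodule.span R (Set.range (fun p : Σ l : cdB.Λ ⊕ Λ,
        Sum.elim cdB.T T l × Sum.elim cdB.T T l =>
        cSum (fun l s t => σ (cdB.c l s t)) c p.1 p.2.1 p.2.2)) := by
      rw [← hJspan] at hyz
      exact Submodule.span_mono hrangeJ hyz
    have hadd := add_mem h1 h2
    simpa using hadd
  · rintro (l | l) s a
    · obtain ⟨rr, hrr⟩ := cdB.mul_mod l s (π a)
      refine ⟨rr, fun t => ?_⟩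
      apply key l
      show π (a * σ (cdB.c l s t) -
          (@Finset.univ (cdB.T l) (cdB.fin l)).sum
            (fun v => rr v • σ (cdB.c l v t))) ∈
        Submodule.span R {x : B | ∃ m, ∃ s' t', cdB.lt l m ∧ x = cdB.c m s' t'}
      have hπeq : π (a * σ (cdB.c l s t) -
          (@Finset.univ (cdB.T l) (cdB.fin l)).sum
            (fun v => rr v • σ (cdB.c l v t))) =
          π a * cdB.c l s t -
          (@Finset.univ (cdB.T l) (cdB.fin l)).sum (fun v => rr v • cdB.c l v t) := by
        rw [map_sub, map_mul, map_sum]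
        simp [hπσ]
      rw [hπeq]
      exact hrr t
    · obtain ⟨rr, hrr⟩ := mul_mod l s a
      refine ⟨rr, fun t => ?_⟩
      refine Submodule.span_mono ?_ (hrr t)
      rintro _ ⟨m, s', t', hlt, rfl⟩
      exact ⟨Sum.inr m, s', t', hlt, rfl⟩
  · rintro (l | l) s t
    · apply key l
      show π (st (σ (cdB.c l s t)) - σ (cdB.c l t s)) ∈
        Submodule.span R {x : B | ∃ m, ∃ s' t', cdB.lt l m ∧ x = cdB.c m s' t'}
      have h1 : π (st (σ (cdB.c l s t))) = stB (cdB.c l s t) := by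
        conv_rhs => rw [← hπσ (cdB.c l s t)]
        rw [hstB]
      have hπeq : π (st (σ (cdB.c l s t)) - σ (cdB.c l t s)) =
          cdB.star (cdB.c l s t) - cdB.c l t s := by
        rw [map_sub, h1, hπσ, hcdB]
      rw [hπeq]
      exact cdB.star_mod l s t
    · refine Submodule.span_mono ?_ (star_mod l s t)
      rintro _ ⟨m, s', t', hlt, rfl⟩
      exact ⟨Sum.inr m, s', t', hlt, rfl⟩

end
end
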